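/- arXiv:2604.19284 — 4 statements merged into one kernel-verified Lean document; each statement's English description precedes it below -/
import Mathlib

section
/- There exists a constant C > 0 such that for all α ∈ (0, 1/e), all s ∈ [0,2], and all x, y ∈ ℝ² with x ≠ y, one has |G(x,y;α) + (ln α)/(2π)|^s ≤ C·(1 + |ln‖x−y‖|^s). -/
open MeasureTheory

/-- The modified Bessel function of the second kind of order zero,
via its integral representation `K₀(w) = ∫₀^∞ exp(−w·cosh t) dt`. -/
noncomputable def K0 (w : ℝ) : ℝ := ∫ t in Set.Ioi (0 : ℝ), Real.exp (-w * Real.cosh t)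

/-- The Green's function of the free resolvent `(-Δ + α²)⁻¹` in two dimensions:
`G(x,y;α) = (1/(2π))·K₀(α‖x−y‖)`. -/
noncomputable def G (x y : EuclideanSpace ℝ (Fin 2)) (α : ℝ) : ℝ :=
  (1 / (2 * Real.pi)) * K0 (α * ‖x - y‖)

lemma cosh_le_exp' {t : ℝ} (ht : 0 ≤ t) : Real.cosh t ≤ Real.exp t := by
  rw [Real.cosh_eq]
  have : Real.exp (-t) ≤ Real.exp t := Real.exp_le_exp.2 (by linarith)
  linarith

lemma half_exp_le_cosh (t : ℝ) : Real.exp t / 2 ≤ Real.cosh t := by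
  rw [Real.cosh_eq]
  have := Real.exp_pos (-t)
  linarith

lemma two_mul_le_exp {s : ℝ} : 2 * s ≤ Real.exp s := by
  have h1 : s / 2 + 1 ≤ Real.exp (s / 2) := Real.add_one_le_exp _
  have h2 : Real.exp s = Real.exp (s / 2) * Real.exp (s / 2) := by
    rw [← Real.exp_add]; ring_nf
  nlinarith [Real.exp_pos (s / 2), sq_nonneg (1 - s / 2)]

lemma K0_integrableOn {w : ℝ} (hw : 0 < w) :
    IntegrableOn (fun t => Real.exp (-w * Real.cosh t)) (Set.Ioi 0) := by
  have hdom : IntegrableOn (fun t => Real.exp (-w / 2) * Real.exp (-(w / 2) * t))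
      (Set.Ioi 0) := (exp_neg_integrableOn_Ioi 0 (by linarith)).const_mul _
  refine hdom.mono' ?_ ?_
  · exact (Real.measurable_exp.comp
      (measurable_const.mul Real.measurable_cosh)).aestronglyMeasurable
  · filter_upwards [ae_restrict_mem measurableSet_Ioi] with t ht
    have ht0 : (0 : ℝ) ≤ t := le_of_lt ht
    rw [Real.norm_eq_abs, abs_of_pos (Real.exp_pos _), ← Real.exp_add]
    apply Real.exp_le_exp.2
    have h1 : Real.exp t / 2 ≤ Real.cosh t := half_exp_le_cosh t
    have h2 : t + 1 ≤ Real.exp t := Real.add_one_le_exp t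
    nlinarith [Real.cosh_pos t]

lemma K0_nonneg (w : ℝ) : 0 ≤ K0 w :=
  setIntegral_nonneg measurableSet_Ioi fun t _ => (Real.exp_pos _).le

lemma K0_split {w : ℝ} (hw : 0 < w) {T : ℝ} (hT : 0 ≤ T) :
    K0 w = (∫ t in Set.Ioc (0 : ℝ) T, Real.exp (-w * Real.cosh t))
      + ∫ t in Set.Ioi T, Real.exp (-w * Real.cosh t) := by
  rw [K0, ← Set.Ioc_union_Ioi_eq_Ioi hT]
  exact setIntegral_union (Set.Ioc_disjoint_Ioi le_rfl) measurableSet_Ioi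
    (((K0_integrableOn hw)).mono_set (by rw [← Set.Ioc_union_Ioi_eq_Ioi hT]; exact Set.subset_union_left))
    (((K0_integrableOn hw)).mono_set (by rw [← Set.Ioc_union_Ioi_eq_Ioi hT]; exact Set.subset_union_right))

lemma K0_le {w : ℝ} (hw : 0 < w) (hw1 : w ≤ 1) : K0 w ≤ -Real.log w + 1 := by
  set T : ℝ := -Real.log w with hTdef
  have hT : 0 ≤ T := neg_nonneg.2 (Real.log_nonpos hw.le hw1)
  have hwT : w = Real.exp (-T) := by
    rw [hTdef, neg_neg, Real.exp_log hw]
  rw [K0_split hw hT]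
  have h1 : (∫ t in Set.Ioc (0 : ℝ) T, Real.exp (-w * Real.cosh t)) ≤ T := by
    calc (∫ t in Set.Ioc (0 : ℝ) T, Real.exp (-w * Real.cosh t))
        ≤ ∫ _ in Set.Ioc (0 : ℝ) T, (1 : ℝ) := by
          apply setIntegral_mono_on
            ((K0_integrableOn hw).mono_set Set.Ioc_subset_Ioi_self)
            (integrableOn_const measure_Ioc_lt_top.ne)
            measurableSet_Ioc
          intro t _
          rw [← Real.exp_zero]
          apply Real.exp_le_exp.2
          nlinarith [Real.cosh_pos t]
      _ = T := by simp [Real.volume_Ioc, hT]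
  have h2 : (∫ t in Set.Ioi T, Real.exp (-w * Real.cosh t)) ≤ 1 := by
    have hpt : ∀ t ∈ Set.Ioi T, Real.exp (-w * Real.cosh t) ≤ Real.exp T * Real.exp (-t) := by
      intro t ht
      have ht' : T < t := ht
      have ht0 : 0 ≤ t := le_trans hT ht'.le
      rw [← Real.exp_add]
      apply Real.exp_le_exp.2
      have hc : Real.exp t / 2 ≤ Real.cosh t := half_exp_le_cosh t
      have h2s : 2 * (t - T) ≤ Real.exp (t - T) := two_mul_le_exp
      have hwe : w * Real.exp t = Real.exp (t - T) := by
        rw [hwT, ← Real.exp_add]; ring_nf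
      nlinarith [Real.exp_pos t, hw]
    calc (∫ t in Set.Ioi T, Real.exp (-w * Real.cosh t))
        ≤ ∫ t in Set.Ioi T, Real.exp T * Real.exp (-t) := by
          apply setIntegral_mono_on
            ((K0_integrableOn hw).mono_set (Set.Ioi_subset_Ioi hT))
            (((exp_neg_integrableOn_Ioi T one_pos).congr_fun
              (fun x _ => by norm_num) measurableSet_Ioi).const_mul _)
            measurableSet_Ioi hpt
      _ = Real.exp T * Real.exp (-T) := by
          rw [integral_const_mul, integral_exp_neg_Ioi]
      _ = 1 := by rw [← Real.exp_add]; simp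
  linarith

lemma K0_ge {w : ℝ} (hw : 0 < w) (hw1 : w ≤ 1) : -Real.log w - 1 ≤ K0 w := by
  set T : ℝ := -Real.log w with hTdef
  have hT : 0 ≤ T := neg_nonneg.2 (Real.log_nonpos hw.le hw1)
  have hwT : Real.exp T = 1 / w := by
    rw [hTdef, Real.exp_neg, Real.exp_log hw, one_div]
  have key : T - 1 ≤ ∫ t in Set.Ioc (0 : ℝ) T, Real.exp (-w * Real.cosh t) := by
    have hcomp : (∫ t in Set.Ioc (0 : ℝ) T, (1 - w * Real.exp t)) = T - w * (Real.exp T - 1) := by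
      rw [← intervalIntegral.integral_of_le hT,
        intervalIntegral.integral_sub intervalIntegrable_const
          ((intervalIntegral.intervalIntegrable_exp).const_mul w)]
      open intervalIntegral in simp [integral_exp]
    have hmono : (∫ t in Set.Ioc (0 : ℝ) T, (1 - w * Real.exp t))
        ≤ ∫ t in Set.Ioc (0 : ℝ) T, Real.exp (-w * Real.cosh t) := by
      apply setIntegral_mono_on
        ((continuous_const.sub (continuous_const.mul Real.continuous_exp)).integrableOn_Ioc)
        ((K0_integrableOn hw).mono_set Set.Ioc_subset_Ioi_self)
        measurableSet_Ioc
      intro t ht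
      have h1 : Real.cosh t ≤ Real.exp t := cosh_le_exp' ht.1.le
      have h2 : -w * Real.cosh t + 1 ≤ Real.exp (-w * Real.cosh t) := Real.add_one_le_exp _
      simp only [Pi.sub_apply, Pi.mul_apply]
      nlinarith
    have h3 : w * (Real.exp T - 1) = 1 - w := by
      rw [hwT]; field_simp
    have : w * (Real.exp T - 1) ≤ 1 := by rw [h3]; linarith
    linarith [hcomp ▸ hmono]
  have hsub : (∫ t in Set.Ioc (0 : ℝ) T, Real.exp (-w * Real.cosh t)) ≤ K0 w := by
    rw [K0]
    apply setIntegral_mono_set (K0_integrableOn hw)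
      (Filter.Eventually.of_forall fun t => (Real.exp_pos _).le)
    exact HasSubset.Subset.eventuallyLE Set.Ioc_subset_Ioi_self
  linarith

lemma K0_le_one {w : ℝ} (hw : 1 ≤ w) : K0 w ≤ 1 := by
  have h1 : K0 w ≤ K0 1 := by
    apply setIntegral_mono_on (K0_integrableOn (by linarith))
      (K0_integrableOn one_pos) measurableSet_Ioi
    intro t _
    apply Real.exp_le_exp.2
    nlinarith [Real.cosh_pos t]
  have := K0_le one_pos le_rfl
  simp at this
  linarith

/-- There is `C > 0` such that for all `α ∈ (0, 1/e)`, all `s ∈ [0,2]` and all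
`x ≠ y` in `ℝ²`: `|G(x,y;α) + (ln α)/(2π)|^s ≤ C·(1 + |ln‖x−y‖|^s)`. -/
theorem green_bound_i :
    ∃ C : ℝ, 0 < C ∧ ∀ α : ℝ, α ∈ Set.Ioo (0 : ℝ) (Real.exp 1)⁻¹ →
      ∀ s : ℝ, s ∈ Set.Icc (0 : ℝ) 2 →
      ∀ x y : EuclideanSpace ℝ (Fin 2), x ≠ y →
        |G x y α + Real.log α / (2 * Real.pi)| ^ s ≤
          C * (1 + |Real.log ‖x - y‖| ^ s) := by
  refine ⟨4, by norm_num, ?_⟩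
  rintro α ⟨hα0, hα1⟩ s ⟨hs0, hs2⟩ x y hxy
  set r : ℝ := ‖x - y‖ with hrdef
  have hr : 0 < r := by
    rw [hrdef]
    exact norm_pos_iff.2 (sub_ne_zero.2 hxy)
  set L : ℝ := |Real.log r| with hLdef
  have hL0 : 0 ≤ L := abs_nonneg _
  have hπ : (6 : ℝ) ≤ 2 * Real.pi := by nlinarith [Real.pi_gt_three]
  have hexp1 : (1:ℝ) < Real.exp 1 := by
    have := Real.exp_one_gt_d9
    linarith
  have hαlt1 : α < 1 := lt_trans hα1 (by rw [inv_lt_one_iff₀]; right; exact hexp1)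
  -- main pointwise bound
  have key : |G x y α + Real.log α / (2 * Real.pi)| ≤ 1 + L := by
    have hG : G x y α + Real.log α / (2 * Real.pi)
        = (K0 (α * r) + Real.log α) / (2 * Real.pi) := by
      rw [G]; field_simp; rfl
    rw [hG, abs_div, abs_of_pos (by positivity : (0:ℝ) < 2 * Real.pi)]
    have hnum : |K0 (α * r) + Real.log α| ≤ 2 + L := by
      rcases le_or_gt (α * r) 1 with hle | hgt
      · have hwp : 0 < α * r := mul_pos hα0 hr
        have h1 := K0_le hwp hle
        have h2 := K0_ge hwp hle
        have hlog : Real.log (α * r) = Real.log α + Real.log r :=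
          Real.log_mul (ne_of_gt hα0) (ne_of_gt hr)
        have hLr : Real.log r ≤ L := le_abs_self _
        have hLn : -L ≤ Real.log r := neg_abs_le _
        rw [abs_le]
        constructor
        · nlinarith
        · nlinarith
      · have hwp : 0 < α * r := mul_pos hα0 hr
        have h1 : K0 (α * r) ≤ 1 := K0_le_one hgt.le
        have h0 : 0 ≤ K0 (α * r) := K0_nonneg _
        have hlogα : Real.log α < 0 := Real.log_neg hα0 hαlt1
        have hr1 : 1 < r := by nlinarith
        have hlogr : 0 < Real.log r := Real.log_pos hr1
        have hLr : Real.log r ≤ L := le_abs_self _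
        have hbound : -Real.log α ≤ Real.log r := by
          have : 1 / r < α := by
            rw [div_lt_iff₀ hr]
            linarith [mul_comm α r ▸ hgt]
          have := Real.log_le_log (by positivity) this.le
          rw [Real.log_div one_ne_zero (ne_of_gt hr), Real.log_one] at this
          linarith
        rw [abs_le]
        constructor <;> nlinarith
    calc |K0 (α * r) + Real.log α| / (2 * Real.pi) ≤ (2 + L) / 2 := by
          apply div_le_div₀ (by linarith) hnum (by norm_num) (by linarith)
      _ ≤ 1 + L := by linarith
  -- now raise to power s
  have h1L : (0:ℝ) ≤ 1 + L := by linarith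
  have step1 : |G x y α + Real.log α / (2 * Real.pi)| ^ s ≤ (1 + L) ^ s :=
    Real.rpow_le_rpow (abs_nonneg _) key hs0
  have step2 : (1 + L) ^ s ≤ 4 * (1 + L ^ s) := by
    have hLs : (0:ℝ) ≤ L ^ s := Real.rpow_nonneg hL0 s
    have h2s : (2:ℝ) ^ s ≤ 4 := by
      calc (2:ℝ) ^ s ≤ (2:ℝ) ^ (2:ℝ) :=
            Real.rpow_le_rpow_of_exponent_le one_le_two hs2
        _ = 4 := by
            rw [show (2:ℝ) = ((2:ℕ):ℝ) by norm_num, Real.rpow_natCast]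
            norm_num
    rcases le_or_gt L 1 with hL1 | hL1
    · calc (1 + L) ^ s ≤ (2:ℝ) ^ s :=
            Real.rpow_le_rpow h1L (by linarith) hs0
        _ ≤ 4 := h2s
        _ ≤ 4 * (1 + L ^ s) := by nlinarith
    · calc (1 + L) ^ s ≤ (2 * L) ^ s :=
            Real.rpow_le_rpow h1L (by linarith) hs0
        _ = 2 ^ s * L ^ s := Real.mul_rpow (by norm_num) hL0
        _ ≤ 4 * L ^ s := by nlinarith
        _ ≤ 4 * (1 + L ^ s) := by nlinarith
  calc |G x y α + Real.log α / (2 * Real.pi)| ^ s ≤ (1 + L) ^ s := step1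
    _ ≤ 4 * (1 + L ^ s) := step2
end

section
/- Let η > 0 and let V ∈ L¹(ℝ²) ∩ L^{1+η}(ℝ²). Then ∫∫_{‖x−y‖<e} |V(x)|·(ln‖x−y‖)²·|V(y)| d(x,y) ≤ (∫_{‖u‖<e} |ln‖u‖|^{2+2/η} du)^{η/(1+η)} · ‖V‖_{L¹(ℝ²)} · ‖V‖_{L^{1+η}(ℝ²)} < ∞. In particular, V satisfies condition (V_roll). -/
open MeasureTheory Set
open scoped ENNReal NNReal

local notation "E2" => EuclideanSpace ℝ (Fin 2)

lemma lint_log_rpow_lt_top (α : ℝ) (hα : 0 ≤ α) :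
    ∫⁻ u in {u : E2 | ‖u‖ < Real.exp 1}, ENNReal.ofReal (|Real.log ‖u‖| ^ α) < ⊤ := by
  set S : Set E2 := {u | ‖u‖ < Real.exp 1} with hS
  set A : ℕ → Set E2 := fun n =>
    {u | ‖u‖ < Real.exp (1 - n)} \ {u | ‖u‖ < Real.exp (-(n : ℝ))} with hA
  have hmeasA : ∀ n, MeasurableSet (A n) := fun n =>
    ((isOpen_lt continuous_norm continuous_const).measurableSet).diff
      (isOpen_lt continuous_norm continuous_const).measurableSet
  have hconv : S \ {0} ⊆ ⋃ n, A n := by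
    rintro u ⟨hu, hu0⟩
    have hu0' : 0 < ‖u‖ := norm_pos_iff.mpr hu0
    set t := Real.log ‖u‖ with ht
    have ht1 : t < 1 := by
      have := (Real.log_lt_iff_lt_exp hu0').mpr hu
      simpa using this
    refine mem_iUnion.2 ⟨⌈-t⌉₊, ⟨?_, ?_⟩⟩
    · show ‖u‖ < Real.exp (1 - (⌈-t⌉₊ : ℝ))
      have h2 : (⌈-t⌉₊ : ℝ) < -t + 1 := by
        rcases le_or_gt 0 (-t) with h | h
        · exact Nat.ceil_lt_add_one h
        · have h0 : ⌈-t⌉₊ = 0 := Nat.ceil_eq_zero.mpr h.le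
          rw [h0]; push_cast; linarith
      have hlt : t < 1 - (⌈-t⌉₊ : ℝ) := by linarith
      calc ‖u‖ = Real.exp t := (Real.exp_log hu0').symm
        _ < Real.exp (1 - (⌈-t⌉₊ : ℝ)) := Real.exp_lt_exp.2 hlt
    · show ¬ ‖u‖ < Real.exp (-(⌈-t⌉₊ : ℝ))
      push_neg
      have h1 : -t ≤ (⌈-t⌉₊ : ℝ) := Nat.le_ceil _
      have hle : -(⌈-t⌉₊ : ℝ) ≤ t := by linarith
      calc Real.exp (-(⌈-t⌉₊ : ℝ)) ≤ Real.exp t := Real.exp_le_exp.2 hle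
        _ = ‖u‖ := Real.exp_log hu0'
  have hbound : ∀ n : ℕ, ∫⁻ u in A n, ENNReal.ofReal (|Real.log ‖u‖| ^ α)
      ≤ ENNReal.ofReal (((n : ℝ) + 1) ^ α * Real.exp (1 - (n : ℝ)) ^ 2)
        * volume (Metric.ball (0 : E2) 1) := by
    intro n
    have hstep : ∀ u ∈ A n, ENNReal.ofReal (|Real.log ‖u‖| ^ α)
        ≤ ENNReal.ofReal (((n : ℝ) + 1) ^ α) := by
      rintro u ⟨h1, h2⟩
      simp only [mem_setOf_eq, not_lt] at h1 h2
      have hu0 : 0 < ‖u‖ := lt_of_lt_of_le (Real.exp_pos _) h2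
      have hlog_lb : -(n : ℝ) ≤ Real.log ‖u‖ := (Real.le_log_iff_exp_le hu0).2 h2
      have hlog_ub : Real.log ‖u‖ < 1 - (n : ℝ) := (Real.log_lt_iff_lt_exp hu0).2 h1
      have habs : |Real.log ‖u‖| ≤ (n : ℝ) + 1 := abs_le.2 ⟨by linarith, by linarith⟩
      exact ENNReal.ofReal_le_ofReal (Real.rpow_le_rpow (abs_nonneg _) habs hα)
    have hsub : A n ⊆ Metric.ball (0 : E2) (Real.exp (1 - (n : ℝ))) := by
      rintro u ⟨h1, -⟩; simpa [Metric.mem_ball, dist_zero_right] using h1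
    calc ∫⁻ u in A n, ENNReal.ofReal (|Real.log ‖u‖| ^ α)
        ≤ ∫⁻ _u in A n, ENNReal.ofReal (((n : ℝ) + 1) ^ α) :=
          setLIntegral_mono' (hmeasA n) hstep
      _ = ENNReal.ofReal (((n : ℝ) + 1) ^ α) * volume (A n) := setLIntegral_const _ _
      _ ≤ ENNReal.ofReal (((n : ℝ) + 1) ^ α)
            * volume (Metric.ball (0 : E2) (Real.exp (1 - (n : ℝ)))) := by
          exact mul_le_mul_right (measure_mono hsub) _
      _ = ENNReal.ofReal (((n : ℝ) + 1) ^ α * Real.exp (1 - (n : ℝ)) ^ 2)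
            * volume (Metric.ball (0 : E2) 1) := by
          rw [Measure.addHaar_ball volume _ (Real.exp_pos _).le]
          rw [finrank_euclideanSpace_fin]
          rw [← mul_assoc, ← ENNReal.ofReal_mul (Real.rpow_nonneg (by positivity) _)]
  have hnn : ∀ n : ℕ, 0 ≤ ((n : ℝ) + 1) ^ α * Real.exp (1 - (n : ℝ)) ^ 2 := fun n => by
    positivity
  have hsum : Summable (fun n : ℕ => ((n : ℝ) + 1) ^ α * Real.exp (1 - (n : ℝ)) ^ 2) := by
    set k := ⌈α⌉₊ with hk
    have hr : ‖Real.exp (-2 : ℝ)‖ < 1 := by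
      rw [Real.norm_eq_abs, abs_of_pos (Real.exp_pos _)]
      exact Real.exp_lt_one_iff.mpr (by norm_num)
    have base : Summable (fun n : ℕ => (n : ℝ) ^ k * Real.exp (-2 : ℝ) ^ n) :=
      summable_pow_mul_geometric_of_norm_lt_one k hr
    have shifted : Summable (fun n : ℕ => ((n : ℝ) + 1) ^ k * Real.exp (-2 : ℝ) ^ (n + 1)) := by
      have := (summable_nat_add_iff 1).mpr base
      refine this.congr fun n => ?_
      push_cast; ring
    have hmul : Summable (fun n : ℕ =>
        Real.exp 2 * (Real.exp 2 * (((n : ℝ) + 1) ^ k * Real.exp (-2 : ℝ) ^ (n + 1)))) :=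
      (shifted.mul_left _).mul_left _
    refine Summable.of_nonneg_of_le hnn (fun n => ?_) hmul
    have hexp : Real.exp (1 - (n : ℝ)) ^ 2 = Real.exp 2 * Real.exp (-2 : ℝ) ^ n := by
      rw [sq, ← Real.exp_add, ← Real.exp_nat_mul, ← Real.exp_add]
      congr 1; push_cast; ring
    have hpow : ((n : ℝ) + 1) ^ α ≤ ((n : ℝ) + 1) ^ k := by
      rw [← Real.rpow_natCast ((n : ℝ) + 1) k]
      exact Real.rpow_le_rpow_of_exponent_le (by push_cast; linarith [Nat.cast_nonneg (α := ℝ) n])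
        (Nat.le_ceil α)
    have h22 : Real.exp 2 * Real.exp (-2 : ℝ) = 1 := by
      rw [← Real.exp_add]; norm_num
    calc ((n : ℝ) + 1) ^ α * Real.exp (1 - (n : ℝ)) ^ 2
        ≤ ((n : ℝ) + 1) ^ k * Real.exp (1 - (n : ℝ)) ^ 2 := by
          have := sq_nonneg (Real.exp (1 - (n : ℝ)))
          nlinarith [hpow]
      _ = Real.exp 2 * (Real.exp 2 * (((n : ℝ) + 1) ^ k * Real.exp (-2 : ℝ) ^ (n + 1))) := by
          rw [hexp, pow_succ]
          linear_combination (-(Real.exp 2 * ((n : ℝ) + 1) ^ k * Real.exp (-2 : ℝ) ^ n)) * h22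
  have h0 : (S \ ({0} : Set E2) : Set E2) =ᵐ[volume] S := by
    refine diff_ae_eq_self.mpr ?_
    exact measure_mono_null (inter_subset_right) (measure_singleton 0)
  calc ∫⁻ u in S, ENNReal.ofReal (|Real.log ‖u‖| ^ α)
      = ∫⁻ u in S \ {0}, ENNReal.ofReal (|Real.log ‖u‖| ^ α) := (setLIntegral_congr h0).symm
    _ ≤ ∫⁻ u in ⋃ n, A n, ENNReal.ofReal (|Real.log ‖u‖| ^ α) := lintegral_mono_set hconv
    _ ≤ ∑' (n : ℕ), ∫⁻ u in A n, ENNReal.ofReal (|Real.log ‖u‖| ^ α) := lintegral_iUnion_le _ _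
    _ ≤ ∑' (n : ℕ), ENNReal.ofReal (((n : ℝ) + 1) ^ α * Real.exp (1 - (n : ℝ)) ^ 2)
          * volume (Metric.ball (0 : E2) 1) := ENNReal.tsum_le_tsum hbound
    _ = (∑' (n : ℕ), ENNReal.ofReal (((n : ℝ) + 1) ^ α * Real.exp (1 - (n : ℝ)) ^ 2))
          * volume (Metric.ball (0 : E2) 1) := ENNReal.tsum_mul_right
    _ < ⊤ := by
        rw [← ENNReal.ofReal_tsum_of_nonneg hnn hsum]
        exact ENNReal.mul_lt_top ENNReal.ofReal_lt_top measure_ball_lt_top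

lemma integrableOn_log_rpow (α : ℝ) (hα : 0 ≤ α) :
    IntegrableOn (fun u : E2 => |Real.log ‖u‖| ^ α) {u : E2 | ‖u‖ < Real.exp 1} := by
  constructor
  · exact (((Real.measurable_log.comp measurable_norm).abs.pow_const α)).aestronglyMeasurable
  · rw [hasFiniteIntegral_iff_ofReal
      (ae_of_all _ fun u => Real.rpow_nonneg (abs_nonneg _) _)]
    exact lint_log_rpow_lt_top α hα

/-- If `η > 0` and `V ∈ L¹(ℝ²) ∩ L^{1+η}(ℝ²)`, then
`∫∫_{‖x−y‖<e} |V(x)|·(ln‖x−y‖)²·|V(y)| d(x,y)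
  ≤ (∫_{‖u‖<e} |ln‖u‖|^{2+2/η} du)^{η/(1+η)} · ‖V‖_{L¹} · ‖V‖_{L^{1+η}} < ∞`;
in particular `V` satisfies condition (V_roll). -/
theorem Lp_implies_V_roll (η : ℝ) (hη : 0 < η)
    (V : EuclideanSpace ℝ (Fin 2) → ℝ) (hV1 : Integrable V)
    (hV2 : MemLp V (ENNReal.ofReal (1 + η))) :
    ∫⁻ p in {p : EuclideanSpace ℝ (Fin 2) × EuclideanSpace ℝ (Fin 2) |
        ‖p.1 - p.2‖ < Real.exp 1},
      ENNReal.ofReal (|V p.1| * (Real.log ‖p.1 - p.2‖) ^ 2 * |V p.2|) ≤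
    ENNReal.ofReal
      ((∫ u in {u : EuclideanSpace ℝ (Fin 2) | ‖u‖ < Real.exp 1},
          |Real.log ‖u‖| ^ (2 + 2 / η)) ^ (η / (1 + η)) *
        (eLpNorm V 1 volume).toReal *
        (eLpNorm V (ENNReal.ofReal (1 + η)) volume).toReal) := by
  have hη' : η ≠ 0 := ne_of_gt hη
  have h1η : (0:ℝ) < 1 + η := by linarith
  set pe : ℝ := 1 + η with hpe
  set q : ℝ := (1 + η) / η with hqdef
  have hq1 : 1 < q := by rw [hqdef, lt_div_iff₀ hη]; linarith
  have hq0 : 0 < q := lt_trans one_pos hq1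
  have hpq : q.HolderConjugate pe := by
    refine ⟨?_, hq0, h1η⟩
    · rw [hqdef, hpe, inv_one]; field_simp; ring
  set f : E2 → ℝ≥0∞ := fun x => ENNReal.ofReal |V x| with hfdef
  set g : E2 → ℝ≥0∞ :=
    fun u => if ‖u‖ < Real.exp 1 then ENNReal.ofReal ((Real.log ‖u‖) ^ 2) else 0 with hgdef
  have hVm : AEMeasurable V volume := hV1.aemeasurable
  have hf : AEMeasurable f volume :=
    (continuous_abs.measurable.comp_aemeasurable hVm).ennreal_ofReal
  have hg : Measurable g := Measurable.ite
    (isOpen_lt continuous_norm continuous_const).measurableSet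
    (((Real.measurable_log.comp measurable_norm).pow_const 2).ennreal_ofReal)
    measurable_const
  set I : ℝ≥0∞ := ∫⁻ u, g u ^ q with hIdef
  set J : ℝ≥0∞ := (∫⁻ y, f y ^ pe) ^ (1/pe) with hJdef
  have hsm : MeasurableSet {z : E2 × E2 | ‖z.1 - z.2‖ < Real.exp 1} :=
    (isOpen_lt ((continuous_fst.sub continuous_snd).norm) continuous_const).measurableSet
  have hind : ∀ z : E2 × E2,
      ({z : E2 × E2 | ‖z.1 - z.2‖ < Real.exp 1}).indicator
        (fun z => ENNReal.ofReal (|V z.1| * (Real.log ‖z.1 - z.2‖) ^ 2 * |V z.2|)) z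
      = f z.1 * g (z.1 - z.2) * f z.2 := by
    intro z
    rw [Set.indicator_apply]
    by_cases hz : ‖z.1 - z.2‖ < Real.exp 1
    · rw [if_pos (show z ∈ {z : E2 × E2 | ‖z.1 - z.2‖ < Real.exp 1} from hz)]
      show _ = _ * (if ‖z.1 - z.2‖ < Real.exp 1 then _ else _) * _
      rw [if_pos hz,
        ENNReal.ofReal_mul (by positivity), ENNReal.ofReal_mul (abs_nonneg _)]
    · rw [if_neg (show z ∉ {z : E2 × E2 | ‖z.1 - z.2‖ < Real.exp 1} from hz)]
      show (0:ℝ≥0∞) = _ * (if ‖z.1 - z.2‖ < Real.exp 1 then _ else _) * _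
      rw [if_neg hz, mul_zero, zero_mul]
  have hFm : AEMeasurable (fun z : E2 × E2 => f z.1 * g (z.1 - z.2) * f z.2)
      ((volume : Measure E2).prod (volume : Measure E2)) :=
    (hf.comp_fst.mul ((hg.comp (measurable_fst.sub measurable_snd)).aemeasurable)).mul hf.comp_snd
  have stepA : (∫⁻ z in {z : E2 × E2 | ‖z.1 - z.2‖ < Real.exp 1},
        ENNReal.ofReal (|V z.1| * (Real.log ‖z.1 - z.2‖) ^ 2 * |V z.2|))
      = ∫⁻ x, f x * ∫⁻ y, g (x - y) * f y := by
    rw [← lintegral_indicator hsm]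
    simp_rw [hind]
    rw [Measure.volume_eq_prod, lintegral_prod _ hFm]
    refine lintegral_congr fun x => ?_
    simp_rw [mul_assoc]
    exact lintegral_const_mul' _ _ ENNReal.ofReal_ne_top
  have inner_le : ∀ x : E2, (∫⁻ y, g (x - y) * f y) ≤ I ^ (1/q) * J := by
    intro x
    have hgx : AEMeasurable (fun y : E2 => g (x - y)) volume :=
      (hg.comp (measurable_const.sub measurable_id)).aemeasurable
    have hH := ENNReal.lintegral_mul_le_Lp_mul_Lq volume hpq hgx hf
    simp only [Pi.mul_apply] at hH
    refine le_trans hH ?_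
    have h2 : (∫⁻ y, g (x - y) ^ q) = I := by
      rw [hIdef]
      exact (Measure.measurePreserving_sub_left (volume : Measure E2) x).lintegral_comp
        (hg.pow_const q)
    rw [h2, hJdef]
  have step2 : (∫⁻ x, f x * ∫⁻ y, g (x - y) * f y) ≤ (∫⁻ x, f x) * (I ^ (1/q) * J) := by
    calc (∫⁻ x, f x * ∫⁻ y, g (x - y) * f y)
        ≤ ∫⁻ x, f x * (I ^ (1/q) * J) :=
          lintegral_mono fun x => mul_le_mul_right (inner_le x) _
      _ = (∫⁻ x, f x) * (I ^ (1/q) * J) := lintegral_mul_const'' _ hf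
  have hf_eq : (∫⁻ x, f x) = eLpNorm V 1 volume := by
    rw [eLpNorm_one_eq_lintegral_enorm]
    refine lintegral_congr fun x => ?_
    simp only [hfdef]
    rw [← Real.norm_eq_abs, ofReal_norm]
  have hpe_ne : (ENNReal.ofReal pe) ≠ 0 := by
    simp only [ne_eq, ENNReal.ofReal_eq_zero, not_le]; linarith
  have hJ_eq : J = eLpNorm V (ENNReal.ofReal pe) volume := by
    rw [eLpNorm_eq_lintegral_rpow_enorm_toReal hpe_ne ENNReal.ofReal_ne_top,
      ENNReal.toReal_ofReal (le_of_lt h1η), hJdef]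
    congr 1
    refine lintegral_congr fun y => ?_
    congr 1
    simp only [hfdef]
    rw [← Real.norm_eq_abs, ofReal_norm]
  set α : ℝ := 2 + 2/η with hαdef
  have hα0 : 0 ≤ α := by positivity
  have h2q : (2:ℝ) * q = α := by rw [hqdef, hαdef]; field_simp; ring
  have hgq : ∀ u : E2, g u ^ q =
      ({u : E2 | ‖u‖ < Real.exp 1}).indicator
        (fun u => ENNReal.ofReal (|Real.log ‖u‖| ^ α)) u := by
    intro u
    rw [Set.indicator_apply]
    by_cases hu : ‖u‖ < Real.exp 1
    · rw [if_pos (show u ∈ {u : E2 | ‖u‖ < Real.exp 1} from hu)]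
      show (if ‖u‖ < Real.exp 1 then _ else _) ^ q = _
      rw [if_pos hu, ENNReal.ofReal_rpow_of_nonneg (by positivity) hq0.le]
      congr 1
      rw [← sq_abs, ← Real.rpow_natCast |Real.log ‖u‖| 2,
        ← Real.rpow_mul (abs_nonneg _)]
      norm_num
      rw [h2q]
    · rw [if_neg (show u ∉ {u : E2 | ‖u‖ < Real.exp 1} from hu)]
      show (if ‖u‖ < Real.exp 1 then _ else _) ^ q = _
      rw [if_neg hu]
      exact ENNReal.zero_rpow_of_pos hq0
  have hI_eq : I = ENNReal.ofReal
      (∫ u in {u : E2 | ‖u‖ < Real.exp 1}, |Real.log ‖u‖| ^ α) := by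
    rw [hIdef]
    simp_rw [hgq]
    rw [lintegral_indicator (isOpen_lt continuous_norm continuous_const).measurableSet,
      ofReal_integral_eq_lintegral_ofReal (integrableOn_log_rpow α hα0)
        (ae_of_all _ fun u => Real.rpow_nonneg (abs_nonneg _) _)]
  set A : ℝ := ∫ u in {u : E2 | ‖u‖ < Real.exp 1}, |Real.log ‖u‖| ^ α with hAdef
  have hA0 : 0 ≤ A := by
    rw [hAdef]; exact integral_nonneg fun u => Real.rpow_nonneg (abs_nonneg _) _
  have hc : 1 / q = η / (1 + η) := by rw [hqdef]; field_simp
  have hIq : I ^ (1/q) = ENNReal.ofReal (A ^ (η / (1 + η))) := by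
    rw [hI_eq, hc, ← ENNReal.ofReal_rpow_of_nonneg hA0 (by positivity)]
  have ht1 : eLpNorm V 1 volume ≠ ⊤ := ((memLp_one_iff_integrable).2 hV1).2.ne
  have ht2 : eLpNorm V (ENNReal.ofReal pe) volume ≠ ⊤ := hV2.2.ne
  rw [stepA]
  refine le_trans step2 (le_of_eq ?_)
  rw [hf_eq, hJ_eq, hIq,
    ENNReal.ofReal_mul (by positivity), ENNReal.ofReal_mul (by positivity),
    ENNReal.ofReal_toReal ht1, ENNReal.ofReal_toReal ht2]
  ring
end

section
/- Let s ∈ [0,1) and let V ∈ L¹(ℝ²) be real-valued and satisfy ∫_{‖x‖>1} |ln‖x‖|^s·|V(x)| dx < ∞ and ∫∫_{‖x−y‖<e} |V(x)|·(ln‖x−y‖)²·|V(y)| d(x,y) < ∞. Then ∫_{ℝ²×ℝ²} |V(x)|·|ln‖x−y‖|^s·|V(y)| d(x,y) < ∞. -/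
open MeasureTheory
open scoped ENNReal

private lemma rpow_add3_le {u v w s : ℝ} (hu : 0 ≤ u) (hv : 0 ≤ v) (hw : 0 ≤ w)
    (hs0 : 0 ≤ s) (hs1 : s ≤ 1) : (u + v + w) ^ s ≤ u ^ s + v ^ s + w ^ s := by
  have key : ∀ a b : ℝ, 0 ≤ a → 0 ≤ b → (a + b) ^ s ≤ a ^ s + b ^ s := by
    intro a b ha hb
    have h := NNReal.rpow_add_le_add_rpow (⟨a, ha⟩ : NNReal) ⟨b, hb⟩ hs0 hs1
    have := NNReal.coe_le_coe.2 h
    push_cast [NNReal.coe_rpow] at this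
    exact this
  calc (u + v + w) ^ s ≤ (u + v) ^ s + w ^ s := key _ _ (by linarith) hw
    _ ≤ u ^ s + v ^ s + w ^ s := by
        have := key u v hu hv; linarith

private lemma aux_near {s t : ℝ} (hs0 : 0 ≤ s) (hs1 : s < 1) : |t| ^ s ≤ 1 + t ^ 2 := by
  rcases le_total (|t|) 1 with h | h
  · have := Real.rpow_le_one (abs_nonneg t) h hs0
    nlinarith [sq_nonneg t]
  · have h1 : |t| ^ s ≤ |t| ^ (1 : ℝ) := Real.rpow_le_rpow_of_exponent_le h hs1.le
    rw [Real.rpow_one] at h1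
    nlinarith [sq_abs t, sq_nonneg (|t| - 1)]

private lemma aux_far {s X Y r : ℝ} (hs0 : 0 ≤ s) (hs1 : s ≤ 1) (hX : 0 ≤ X) (hY : 0 ≤ Y)
    (hr : Real.exp 1 ≤ r) (hle : r ≤ X + Y) :
    |Real.log r| ^ s ≤ Real.log 2 ^ s +
      (if 1 < X then |Real.log X| ^ s else 0) + (if 1 < Y then |Real.log Y| ^ s else 0) := by
  have h1r : (1 : ℝ) ≤ r := le_trans (Real.one_le_exp (by norm_num)) hr
  have hlr0 : 0 ≤ Real.log r := Real.log_nonneg h1r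
  rw [abs_of_nonneg hlr0]
  rcases eq_or_lt_of_le hs0 with rfl | hspos
  · simp only [Real.rpow_zero]
    split_ifs <;> norm_num
  · set a := max (Real.log X) 0 with ha
    set b := max (Real.log Y) 0 with hb
    have ha0 : 0 ≤ a := le_max_right _ _
    have hb0 : 0 ≤ b := le_max_right _ _
    have hXa : X ≤ Real.exp a := by
      rcases le_or_gt X 1 with h | h
      · calc X ≤ 1 := h
          _ ≤ Real.exp a := Real.one_le_exp ha0
      · calc X = Real.exp (Real.log X) := (Real.exp_log (by linarith)).symm
          _ ≤ Real.exp a := Real.exp_le_exp.2 (le_max_left _ _)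
    have hYb : Y ≤ Real.exp b := by
      rcases le_or_gt Y 1 with h | h
      · calc Y ≤ 1 := h
          _ ≤ Real.exp b := Real.one_le_exp hb0
      · calc Y = Real.exp (Real.log Y) := (Real.exp_log (by linarith)).symm
          _ ≤ Real.exp b := Real.exp_le_exp.2 (le_max_left _ _)
    have hea : (1:ℝ) ≤ Real.exp a := Real.one_le_exp ha0
    have heb : (1:ℝ) ≤ Real.exp b := Real.one_le_exp hb0
    have hr2 : r ≤ 2 * (Real.exp a * Real.exp b) := by nlinarith
    have hlog : Real.log r ≤ Real.log 2 + a + b := by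
      have h1 : Real.log r ≤ Real.log (2 * (Real.exp a * Real.exp b)) :=
        Real.log_le_log (by linarith) hr2
      rw [Real.log_mul (by norm_num) (by positivity), Real.log_mul (by positivity) (by positivity),
        Real.log_exp, Real.log_exp] at h1
      linarith
    have hmain : Real.log r ^ s ≤ Real.log 2 ^ s + a ^ s + b ^ s := by
      calc Real.log r ^ s ≤ (Real.log 2 + a + b) ^ s :=
            Real.rpow_le_rpow hlr0 hlog hs0
        _ ≤ Real.log 2 ^ s + a ^ s + b ^ s :=
            rpow_add3_le (Real.log_nonneg (by norm_num)) ha0 hb0 hs0 hs1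
    have haX : a ^ s ≤ if 1 < X then |Real.log X| ^ s else 0 := by
      split_ifs with h
      · rw [ha, max_eq_left (Real.log_nonneg h.le),
          abs_of_nonneg (Real.log_nonneg h.le)]
      · have : a = 0 := by
          rw [ha, max_eq_right]
          exact Real.log_nonpos hX (not_lt.1 h)
        rw [this, Real.zero_rpow hspos.ne']
    have hbY : b ^ s ≤ if 1 < Y then |Real.log Y| ^ s else 0 := by
      split_ifs with h
      · rw [hb, max_eq_left (Real.log_nonneg h.le),
          abs_of_nonneg (Real.log_nonneg h.le)]
      · have : b = 0 := by
          rw [hb, max_eq_right]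
          exact Real.log_nonpos hY (not_lt.1 h)
        rw [this, Real.zero_rpow hspos.ne']
    linarith

/-- If `s ∈ [0,1)` and `V ∈ L¹(ℝ²)` is real-valued and satisfies conditions
(V_ln_s) and (V_roll), then `∫∫ |V(x)|·|ln‖x−y‖|^s·|V(y)| d(x,y) < ∞`. -/
theorem log_kernel_integrable (s : ℝ) (hs : s ∈ Set.Ico (0 : ℝ) 1)
    (V : EuclideanSpace ℝ (Fin 2) → ℝ) (hV : Integrable V)
    (hlns : ∫⁻ x in {x : EuclideanSpace ℝ (Fin 2) | 1 < ‖x‖},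
      ENNReal.ofReal (|Real.log ‖x‖| ^ s * |V x|) < ⊤)
    (hroll : ∫⁻ p in {p : EuclideanSpace ℝ (Fin 2) × EuclideanSpace ℝ (Fin 2) |
        ‖p.1 - p.2‖ < Real.exp 1},
      ENNReal.ofReal (|V p.1| * (Real.log ‖p.1 - p.2‖) ^ 2 * |V p.2|) < ⊤) :
    ∫⁻ p : EuclideanSpace ℝ (Fin 2) × EuclideanSpace ℝ (Fin 2),
      ENNReal.ofReal (|V p.1| * |Real.log ‖p.1 - p.2‖| ^ s * |V p.2|) < ⊤ := by
  classical
  obtain ⟨hs0, hs1⟩ := hs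
  set g : EuclideanSpace ℝ (Fin 2) → ℝ≥0∞ := fun x => ENNReal.ofReal |V x| with hgdef
  set h : EuclideanSpace ℝ (Fin 2) → ℝ≥0∞ := fun x => Set.indicator {x : EuclideanSpace ℝ (Fin 2) | 1 < ‖x‖}
      (fun x => ENNReal.ofReal (|Real.log ‖x‖| ^ s * |V x|)) x with hhdef
  set k : (EuclideanSpace ℝ (Fin 2)) × (EuclideanSpace ℝ (Fin 2)) → ℝ≥0∞ := fun p => Set.indicator {p : EuclideanSpace ℝ (Fin 2) × EuclideanSpace ℝ (Fin 2) | ‖p.1 - p.2‖ < Real.exp 1}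
      (fun p => ENNReal.ofReal (|V p.1| * (Real.log ‖p.1 - p.2‖) ^ 2 * |V p.2|)) p with hkdef
  set c : ℝ≥0∞ := ENNReal.ofReal (1 + Real.log 2 ^ s) with hcdef
  have hVm : AEMeasurable V (volume : Measure (EuclideanSpace ℝ (Fin 2))) := hV.aestronglyMeasurable.aemeasurable
  have hVabs : AEMeasurable (fun x => |V x|) (volume : Measure (EuclideanSpace ℝ (Fin 2))) :=
    continuous_abs.measurable.comp_aemeasurable hVm
  have hgm : AEMeasurable g (volume : Measure (EuclideanSpace ℝ (Fin 2))) := hVabs.ennreal_ofReal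
  have hS1 : MeasurableSet {x : EuclideanSpace ℝ (Fin 2) | 1 < ‖x‖} :=
    (isOpen_lt continuous_const continuous_norm).measurableSet
  have hS2 : MeasurableSet {p : EuclideanSpace ℝ (Fin 2) × EuclideanSpace ℝ (Fin 2) | ‖p.1 - p.2‖ < Real.exp 1} :=
    (isOpen_lt (continuous_fst.sub continuous_snd).norm continuous_const).measurableSet
  have hlogm : Measurable fun x : EuclideanSpace ℝ (Fin 2) => |Real.log ‖x‖| ^ s :=
    (Real.continuous_rpow_const hs0).measurable.comp
      (Real.measurable_log.comp measurable_norm).abs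
  have hhm : AEMeasurable h (volume : Measure (EuclideanSpace ℝ (Fin 2))) :=
    AEMeasurable.indicator ((hlogm.aemeasurable.mul hVabs).ennreal_ofReal) hS1
  have hA : ∫⁻ x, g x < ⊤ := by
    have h2 := hV.2
    rw [HasFiniteIntegral] at h2
    refine lt_of_eq_of_lt ?_ h2
    refine lintegral_congr fun x => ?_
    simp only [hgdef]
    exact (Real.enorm_eq_ofReal_abs (V x)).symm
  have hB : ∫⁻ x, h x < ⊤ := by
    simp only [hhdef]
    rw [lintegral_indicator hS1]
    exact hlns
  have hC : ∫⁻ p, k p < ⊤ := by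
    simp only [hkdef]
    rw [lintegral_indicator hS2]
    exact hroll
  have hc_ne : c ≠ ⊤ := ENNReal.ofReal_ne_top
  have hc1 : (1 : ℝ≥0∞) ≤ c := by
    rw [hcdef, ← ENNReal.ofReal_one]
    have : 0 ≤ Real.log 2 ^ s := Real.rpow_nonneg (Real.log_nonneg one_le_two) s
    exact ENNReal.ofReal_le_ofReal (by linarith)
  -- pointwise bound
  have hbound : ∀ p : (EuclideanSpace ℝ (Fin 2)) × (EuclideanSpace ℝ (Fin 2)),
      ENNReal.ofReal (|V p.1| * |Real.log ‖p.1 - p.2‖| ^ s * |V p.2|) ≤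
        c * (g p.1 * g p.2) + k p + h p.1 * g p.2 + g p.1 * h p.2 := by
    rintro ⟨x, y⟩
    by_cases hnear : ‖x - y‖ < Real.exp 1
    · have hkval : k (x, y) = ENNReal.ofReal (|V x| * (Real.log ‖x - y‖) ^ 2 * |V y|) := by
        simp only [hkdef]
        exact Set.indicator_of_mem
          (show (x, y) ∈ {p : EuclideanSpace ℝ (Fin 2) × EuclideanSpace ℝ (Fin 2) |
            ‖p.1 - p.2‖ < Real.exp 1} from hnear) _
      have hreal : |V x| * |Real.log ‖x - y‖| ^ s * |V y| ≤
          |V x| * |V y| + |V x| * (Real.log ‖x - y‖) ^ 2 * |V y| := by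
        have h1 := aux_near (t := Real.log ‖x - y‖) hs0 hs1
        have h2 := mul_le_mul_of_nonneg_left h1 (abs_nonneg (V x))
        have h3 := mul_le_mul_of_nonneg_right h2 (abs_nonneg (V y))
        nlinarith [h3]
      calc ENNReal.ofReal (|V x| * |Real.log ‖x - y‖| ^ s * |V y|)
          ≤ ENNReal.ofReal (|V x| * |V y| + |V x| * (Real.log ‖x - y‖) ^ 2 * |V y|) :=
            ENNReal.ofReal_le_ofReal hreal
        _ = ENNReal.ofReal (|V x| * |V y|) +
            ENNReal.ofReal (|V x| * (Real.log ‖x - y‖) ^ 2 * |V y|) :=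
            ENNReal.ofReal_add (by positivity) (by positivity)
        _ ≤ c * (g x * g y) + k (x, y) := by
            refine add_le_add ?_ (le_of_eq hkval.symm)
            rw [hgdef, ← ENNReal.ofReal_mul (abs_nonneg (V x))]
            exact le_mul_of_one_le_left zero_le hc1
        _ ≤ c * (g x * g y) + k (x, y) + h x * g y + g x * h y := by
            exact le_add_right (le_add_right le_rfl)
    · push_neg at hnear
      have hfar := aux_far (s := s) hs0 hs1.le (norm_nonneg x) (norm_nonneg y)
        hnear (norm_sub_le x y)
      have hiX : (0:ℝ) ≤ if 1 < ‖x‖ then |Real.log ‖x‖| ^ s else 0 := by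
        split_ifs <;> positivity
      have hiY : (0:ℝ) ≤ if 1 < ‖y‖ then |Real.log ‖y‖| ^ s else 0 := by
        split_ifs <;> positivity
      have hreal : |V x| * |Real.log ‖x - y‖| ^ s * |V y| ≤
          Real.log 2 ^ s * (|V x| * |V y|)
          + (if 1 < ‖x‖ then |Real.log ‖x‖| ^ s else 0) * |V x| * |V y|
          + |V x| * ((if 1 < ‖y‖ then |Real.log ‖y‖| ^ s else 0) * |V y|) := by
        have h2 := mul_le_mul_of_nonneg_left hfar (abs_nonneg (V x))
        have h3 := mul_le_mul_of_nonneg_right h2 (abs_nonneg (V y))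
        nlinarith [h3]
      calc ENNReal.ofReal (|V x| * |Real.log ‖x - y‖| ^ s * |V y|)
          ≤ ENNReal.ofReal (Real.log 2 ^ s * (|V x| * |V y|)
              + (if 1 < ‖x‖ then |Real.log ‖x‖| ^ s else 0) * |V x| * |V y|
              + |V x| * ((if 1 < ‖y‖ then |Real.log ‖y‖| ^ s else 0) * |V y|)) :=
            ENNReal.ofReal_le_ofReal hreal
        _ = ENNReal.ofReal (Real.log 2 ^ s * (|V x| * |V y|))
            + ENNReal.ofReal ((if 1 < ‖x‖ then |Real.log ‖x‖| ^ s else 0) * |V x| * |V y|)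
            + ENNReal.ofReal (|V x| * ((if 1 < ‖y‖ then |Real.log ‖y‖| ^ s else 0) * |V y|)) := by
            rw [ENNReal.ofReal_add (by positivity) (by positivity),
              ENNReal.ofReal_add (by positivity) (by positivity)]
        _ ≤ c * (g x * g y) + h x * g y + g x * h y := by
            refine add_le_add (add_le_add ?_ ?_) ?_
            · rw [ENNReal.ofReal_mul (by positivity), hgdef,
                ← ENNReal.ofReal_mul (abs_nonneg (V x))]
              have h0 : 0 ≤ Real.log 2 ^ s := Real.rpow_nonneg (Real.log_nonneg one_le_two) s
              exact mul_le_mul_left (ENNReal.ofReal_le_ofReal (by linarith)) _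
            · split_ifs with hx1
              · rw [hhdef, hgdef]
                simp only [Set.indicator_of_mem (show x ∈ {x : EuclideanSpace ℝ (Fin 2) | 1 < ‖x‖} from hx1)]
                rw [← ENNReal.ofReal_mul (by positivity)]
              · simp
            · split_ifs with hy1
              · rw [hhdef, hgdef]
                simp only [Set.indicator_of_mem (show y ∈ {x : EuclideanSpace ℝ (Fin 2) | 1 < ‖x‖} from hy1)]
                rw [← ENNReal.ofReal_mul (abs_nonneg (V x))]
              · simp
        _ = c * (g x * g y) + 0 + h x * g y + g x * h y := by ring
        _ ≤ c * (g x * g y) + k (x, y) + h x * g y + g x * h y :=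
            add_le_add (add_le_add (add_le_add le_rfl zero_le) le_rfl) le_rfl
  -- measurability on the product
  have hqf : Measure.QuasiMeasurePreserving (Prod.fst : EuclideanSpace ℝ (Fin 2) × EuclideanSpace ℝ (Fin 2) → EuclideanSpace ℝ (Fin 2)) volume volume := by
    rw [Measure.volume_eq_prod]; exact Measure.quasiMeasurePreserving_fst
  have hqs : Measure.QuasiMeasurePreserving (Prod.snd : EuclideanSpace ℝ (Fin 2) × EuclideanSpace ℝ (Fin 2) → EuclideanSpace ℝ (Fin 2)) volume volume := by
    rw [Measure.volume_eq_prod]; exact Measure.quasiMeasurePreserving_snd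
  have hm1 : AEMeasurable (fun p : (EuclideanSpace ℝ (Fin 2)) × (EuclideanSpace ℝ (Fin 2)) => g p.1 * g p.2) volume :=
    (hgm.comp_quasiMeasurePreserving hqf).mul (hgm.comp_quasiMeasurePreserving hqs)
  have hm3 : AEMeasurable (fun p : (EuclideanSpace ℝ (Fin 2)) × (EuclideanSpace ℝ (Fin 2)) => h p.1 * g p.2) volume :=
    (hhm.comp_quasiMeasurePreserving hqf).mul (hgm.comp_quasiMeasurePreserving hqs)
  have hm4 : AEMeasurable (fun p : (EuclideanSpace ℝ (Fin 2)) × (EuclideanSpace ℝ (Fin 2)) => g p.1 * h p.2) volume :=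
    (hgm.comp_quasiMeasurePreserving hqf).mul (hhm.comp_quasiMeasurePreserving hqs)
  have hmk : AEMeasurable k volume := by
    have hVfst : AEMeasurable (fun p : (EuclideanSpace ℝ (Fin 2)) × (EuclideanSpace ℝ (Fin 2)) => |V p.1|) volume :=
      hVabs.comp_quasiMeasurePreserving hqf
    have hVsnd : AEMeasurable (fun p : (EuclideanSpace ℝ (Fin 2)) × (EuclideanSpace ℝ (Fin 2)) => |V p.2|) volume :=
      hVabs.comp_quasiMeasurePreserving hqs
    have hlg : Measurable (fun p : (EuclideanSpace ℝ (Fin 2)) × (EuclideanSpace ℝ (Fin 2)) => (Real.log ‖p.1 - p.2‖) ^ 2) :=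
      (Real.measurable_log.comp (measurable_fst.sub measurable_snd).norm).pow_const 2
    exact AEMeasurable.indicator
      (((hVfst.mul hlg.aemeasurable).mul hVsnd).ennreal_ofReal) hS2
  -- product integral identities
  have hprod : ∀ (f₁ f₂ : EuclideanSpace ℝ (Fin 2) → ℝ≥0∞), AEMeasurable f₁ volume → AEMeasurable f₂ volume →
      ∫⁻ p : (EuclideanSpace ℝ (Fin 2)) × (EuclideanSpace ℝ (Fin 2)), f₁ p.1 * f₂ p.2 = (∫⁻ x, f₁ x) * ∫⁻ y, f₂ y := by
    intro f₁ f₂ h₁ h₂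
    rw [Measure.volume_eq_prod]
    exact lintegral_prod_mul h₁ h₂
  calc ∫⁻ p : (EuclideanSpace ℝ (Fin 2)) × (EuclideanSpace ℝ (Fin 2)), ENNReal.ofReal (|V p.1| * |Real.log ‖p.1 - p.2‖| ^ s * |V p.2|)
      ≤ ∫⁻ p : (EuclideanSpace ℝ (Fin 2)) × (EuclideanSpace ℝ (Fin 2)), (c * (g p.1 * g p.2) + k p + h p.1 * g p.2 + g p.1 * h p.2) :=
        lintegral_mono hbound
    _ < ⊤ := by
        rw [lintegral_add_left' ((((hm1.const_mul c).fun_add hmk).fun_add hm3)) _,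
          lintegral_add_left' ((hm1.const_mul c).fun_add hmk) _,
          lintegral_add_left' (hm1.const_mul c) _,
          lintegral_const_mul' c _ hc_ne,
          hprod g g hgm hgm, hprod h g hhm hgm, hprod g h hgm hhm]
        have t1 : c * ((∫⁻ x, g x) * ∫⁻ y, g y) < ⊤ :=
          ENNReal.mul_lt_top hc_ne.lt_top (ENNReal.mul_lt_top hA hA)
        have t3 : (∫⁻ x, h x) * ∫⁻ y, g y < ⊤ := ENNReal.mul_lt_top hB hA
        have t4 : (∫⁻ x, g x) * ∫⁻ y, h y < ⊤ := ENNReal.mul_lt_top hA hB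
        exact ENNReal.add_lt_top.2 ⟨ENNReal.add_lt_top.2 ⟨ENNReal.add_lt_top.2 ⟨t1, hC⟩, t3⟩, t4⟩
end

section
/- Let s ∈ [0,1) and let V ∈ L¹(ℝ²) be real-valued and satisfy conditions (V_ln_s) and (V_roll). Then as α → 0+, ∫_{ℝ²×ℝ²} |V(x)|·|G(x,y;α) − g(α)|²·|V(y)| d(x,y) = o(|ln α|^{2−s}); in particular the Hilbert–Schmidt norm of the integral operator M(α) with kernel |V(x)|^{1/2}·(G(x,y;α) − g(α))·V(y)^{1/2} satisfies ‖M(α)‖² = o(|g(α)|^{2−s}). -/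
open MeasureTheory Filter Asymptotics
open scoped ENNReal NNReal

/-- The function `g(α) = −(ln α)/(2π)`. -/
noncomputable def g (α : ℝ) : ℝ := -(Real.log α) / (2 * Real.pi)

namespace HSaux

open Real Set
open scoped ENNReal NNReal

local notation "E2" => EuclideanSpace ℝ (Fin 2)

lemma cosh_ge_half_exp (t : ℝ) : Real.exp t / 2 ≤ Real.cosh t := by
  rw [Real.cosh_eq]
  have := (Real.exp_pos (-t)).le
  linarith

lemma K0_integrableOn {w : ℝ} (hw : 0 < w) :
    IntegrableOn (fun t => Real.exp (-w * Real.cosh t)) (Set.Ioi (0 : ℝ)) := by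
  have hInt : IntegrableOn (fun t => Real.exp (-(w/2)) * Real.exp (-(w/2) * t))
      (Set.Ioi (0:ℝ)) := (exp_neg_integrableOn_Ioi 0 (by linarith)).const_mul _
  refine hInt.mono' ?_ ?_
  · exact ((Real.continuous_exp.comp ((continuous_const.mul Real.continuous_cosh))).aestronglyMeasurable)
  · filter_upwards [ae_restrict_mem measurableSet_Ioi] with t ht
    have h1 : (1 + t) / 2 ≤ Real.cosh t := by
      have h2 := cosh_ge_half_exp t
      have h3 := Real.add_one_le_exp t
      linarith
    have : -w * Real.cosh t ≤ -(w/2) + -(w/2) * t := by nlinarith [hw.le]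
    rw [Real.norm_eq_abs, abs_of_pos (Real.exp_pos _), ← Real.exp_add]
    exact Real.exp_le_exp.mpr this

lemma K0_nonneg (w : ℝ) : 0 ≤ K0 w :=
  integral_nonneg fun t => (Real.exp_pos _).le

lemma K0_le_of_le_one {w : ℝ} (hw : 0 < w) (hw1 : w ≤ 1) : K0 w ≤ -Real.log w + 2 := by
  set T : ℝ := Real.log (2 / w) with hT
  have hT0 : 0 < T := Real.log_pos (by rw [lt_div_iff₀ hw]; linarith)
  have heT : Real.exp T = 2 / w := Real.exp_log (by positivity)
  have hint := K0_integrableOn hw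
  -- split the integral
  have hsplit : K0 w = (∫ t in Ioc 0 T, Real.exp (-w * Real.cosh t))
      + ∫ t in Ioi T, Real.exp (-w * Real.cosh t) := by
    rw [K0, ← Set.Ioc_union_Ioi_eq_Ioi hT0.le,
      setIntegral_union (Set.Ioc_disjoint_Ioi le_rfl) measurableSet_Ioi
        (hint.mono_set (by rw [← Set.Ioc_union_Ioi_eq_Ioi hT0.le]; exact Set.subset_union_left))
        (hint.mono_set (by rw [← Set.Ioc_union_Ioi_eq_Ioi hT0.le]; exact Set.subset_union_right))]
  have h1 : (∫ t in Ioc 0 T, Real.exp (-w * Real.cosh t)) ≤ T := by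
    have : (∫ t in Ioc 0 T, Real.exp (-w * Real.cosh t)) ≤ ∫ _t in Ioc 0 T, (1:ℝ) := by
      refine setIntegral_mono_on
        (hint.mono_set (by rw [← Set.Ioc_union_Ioi_eq_Ioi hT0.le]; exact Set.subset_union_left))
        (integrableOn_const (by rw [Real.volume_Ioc]; exact ENNReal.ofReal_ne_top))
        measurableSet_Ioc ?_
      intro t _
      rw [← Real.exp_zero]
      apply Real.exp_le_exp.mpr
      have := Real.cosh_pos (x := t)
      nlinarith
    simpa [Real.volume_Ioc, ENNReal.toReal_ofReal hT0.le, hT0.le] using this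
  have h2 : (∫ t in Ioi T, Real.exp (-w * Real.cosh t)) ≤ 1 := by
    have hmaj : IntegrableOn (fun t => Real.exp (T - 1) * Real.exp (-t)) (Ioi T) := by
      have := (exp_neg_integrableOn_Ioi T (zero_lt_one (α := ℝ))).const_mul (Real.exp (T-1))
      simpa [IntegrableOn] using this
    have hle : (∫ t in Ioi T, Real.exp (-w * Real.cosh t))
        ≤ ∫ t in Ioi T, Real.exp (T - 1) * Real.exp (-t) := by
      refine setIntegral_mono_on
        (hint.mono_set (by rw [← Set.Ioc_union_Ioi_eq_Ioi hT0.le]; exact Set.subset_union_right))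
        hmaj measurableSet_Ioi ?_
      intro t ht
      rw [← Real.exp_add]
      apply Real.exp_le_exp.mpr
      -- -w cosh t ≤ T - 1 - t,  since w cosh t ≥ (w/2) e^t = e^{t-T} ≥ 1 + (t - T)
      have e1 : Real.exp (t - T) ≤ w * Real.cosh t := by
        have h2 := cosh_ge_half_exp t
        have : Real.exp (t - T) = (w/2) * Real.exp t := by
          rw [Real.exp_sub, heT]; field_simp
        rw [this]
        nlinarith [hw.le]
      have e2 : 1 + (t - T) ≤ Real.exp (t - T) := by
        have := Real.add_one_le_exp (t - T); linarith
      linarith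
    have : (∫ t in Ioi T, Real.exp (T - 1) * Real.exp (-t))
        = Real.exp (T-1) * Real.exp (-T) := by
      rw [integral_const_mul, integral_exp_neg_Ioi]
    rw [this, ← Real.exp_add] at hle
    refine hle.trans ?_
    have he : T - 1 + -T = -1 := by ring
    rw [he]
    calc Real.exp (-1) ≤ Real.exp 0 := Real.exp_le_exp.mpr (by norm_num)
    _ = 1 := Real.exp_zero
  have hTle : T ≤ -Real.log w + 1 := by
    rw [hT, Real.log_div two_ne_zero hw.ne']
    have : Real.log 2 ≤ 1 := by
      have := Real.log_le_sub_one_of_pos (x := 2) (by norm_num); linarith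
    linarith
  linarith [hsplit, h1, h2, hTle]

lemma K0_ge_of_le_one {w : ℝ} (hw : 0 < w) (hw1 : w ≤ 1) : -Real.log w - 1/2 ≤ K0 w := by
  set T : ℝ := -Real.log w with hT
  have hT0 : 0 ≤ T := by
    rw [hT]; simpa using Real.log_nonpos hw.le hw1
  have heT : Real.exp T = 1 / w := by
    rw [hT, Real.exp_neg, Real.exp_log hw]; rw [one_div]
  have hint := K0_integrableOn hw
  -- lower bound by integral over Ioc 0 T
  have h1 : (∫ t in Ioc 0 T, Real.exp (-w * Real.cosh t)) ≤ K0 w := by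
    rw [K0]
    refine setIntegral_mono_set hint ?_ ?_
    · filter_upwards with t using (Real.exp_pos _).le
    · filter_upwards with t ht using ht.1
  -- the interval integral of 1 - w cosh t
  have hFTC : (∫ t in (0:ℝ)..T, (1 - w * Real.cosh t)) = T - w * Real.sinh T := by
    have : ∀ x ∈ Set.uIcc (0:ℝ) T, HasDerivAt (fun t => t - w * Real.sinh t)
        (1 - w * Real.cosh x) x := by
      intro x _
      exact (hasDerivAt_id x).sub ((Real.hasDerivAt_sinh x).const_mul w)
    rw [intervalIntegral.integral_eq_sub_of_hasDerivAt this
      (((continuous_const.sub (continuous_const.mul Real.continuous_cosh))).intervalIntegrable 0 T)]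
    simp [Real.sinh_zero]
  have h2 : T - w * Real.sinh T ≤ ∫ t in Ioc 0 T, Real.exp (-w * Real.cosh t) := by
    rw [← hFTC, intervalIntegral.integral_of_le hT0]
    refine setIntegral_mono_on
      (((continuous_const.sub (continuous_const.mul Real.continuous_cosh))).integrableOn_Ioc)
      (hint.mono_set (fun t ht => ht.1)) measurableSet_Ioc ?_
    intro t _
    have := Real.add_one_le_exp (-w * Real.cosh t)
    linarith
  have h3 : w * Real.sinh T ≤ 1/2 := by
    have hs : Real.sinh T ≤ Real.exp T / 2 := by
      rw [Real.sinh_eq]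
      have := (Real.exp_pos (-T)).le
      linarith
    have : w * Real.sinh T ≤ w * (Real.exp T / 2) := by
      apply mul_le_mul_of_nonneg_left hs hw.le
    rw [heT] at this
    calc w * Real.sinh T ≤ w * (1/w/2) := this
    _ = 1/2 := by field_simp
  linarith

lemma K0_le_two_of_one_le {w : ℝ} (hw : 1 ≤ w) : K0 w ≤ 2 := by
  have hw0 : (0:ℝ) < w := lt_of_lt_of_le one_pos hw
  have hmaj : IntegrableOn (fun t => Real.exp (-(1/2)) * Real.exp (-(1/2) * t)) (Ioi (0:ℝ)) :=
    (exp_neg_integrableOn_Ioi 0 (by norm_num)).const_mul _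
  have hle : K0 w ≤ ∫ t in Ioi (0:ℝ), Real.exp (-(1/2)) * Real.exp (-(1/2) * t) := by
    rw [K0]
    refine setIntegral_mono_on (K0_integrableOn hw0) hmaj measurableSet_Ioi ?_
    intro t ht
    rw [← Real.exp_add]
    apply Real.exp_le_exp.mpr
    have h1 : (1 + t)/2 ≤ Real.cosh t := by
      have := cosh_ge_half_exp t
      have := Real.add_one_le_exp t
      linarith
    nlinarith [Real.cosh_pos (x := t)]
  have hval : (∫ t in Ioi (0:ℝ), Real.exp (-(1/2)) * Real.exp (-(1/2) * t))
      = Real.exp (-(1/2)) * 2 := by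
    rw [integral_const_mul]
    have hs2 : (∫ t in Ioi (0:ℝ), Real.exp (-(1/2) * t)) = 2 := by
      have h := MeasureTheory.integral_comp_mul_left_Ioi (fun u => Real.exp (-u)) 0
        (by norm_num : (0:ℝ) < 1/2)
      simp only [mul_zero] at h
      have h2 : (∫ t in Ioi (0:ℝ), Real.exp (-(1/2) * t))
          = ∫ t in Ioi (0:ℝ), Real.exp (-(1/2 * t)) := by
        congr 1; ext t; ring_nf
      rw [h2, h, integral_exp_neg_Ioi]
      norm_num
    rw [hs2]
  rw [hval] at hle
  refine hle.trans ?_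
  nlinarith [Real.exp_lt_one_iff.mpr (by norm_num : -(1/2:ℝ) < 0)]

lemma K0_measurable : Measurable K0 := by
  have hc : Continuous (Function.uncurry fun (w t : ℝ) => Real.exp (-w * Real.cosh t)) := by
    apply Real.continuous_exp.comp
    exact (continuous_fst.neg.mul (Real.continuous_cosh.comp continuous_snd))
  exact (StronglyMeasurable.integral_prod_right hc.stronglyMeasurable).measurable

/-- The main pointwise bound. -/
lemma G_sub_g_abs_le {α : ℝ} (hα : 0 < α) {x y : EuclideanSpace ℝ (Fin 2)} (hxy : x ≠ y) :
    |G x y α - g α| ≤ 2 + (if α * ‖x - y‖ ≤ 1 then |Real.log ‖x - y‖| else |Real.log α|) := by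
  have hr : 0 < ‖x - y‖ := by
    simpa [sub_eq_zero] using hxy
  set r : ℝ := ‖x - y‖ with hrdef
  have hpi : (1:ℝ) ≤ 2 * Real.pi := by nlinarith [Real.pi_gt_three]
  have hGg : G x y α - g α = (K0 (α * r) + Real.log α) / (2 * Real.pi) := by
    rw [G, g]; field_simp; rw [hrdef]; ring
  rw [hGg, abs_div, abs_of_pos (by positivity : (0:ℝ) < 2 * Real.pi)]
  have habs : |K0 (α * r) + Real.log α|
      ≤ 2 + (if α * r ≤ 1 then |Real.log r| else |Real.log α|) := by
    split_ifs with h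
    · -- α r ≤ 1
      have hw0 : 0 < α * r := by positivity
      have hklog : |K0 (α * r) + Real.log (α * r)| ≤ 2 := by
        rw [abs_le]
        constructor
        · have := K0_ge_of_le_one hw0 h; linarith
        · have := K0_le_of_le_one hw0 h; linarith
      have : K0 (α * r) + Real.log α = (K0 (α * r) + Real.log (α * r)) - Real.log r := by
        rw [Real.log_mul hα.ne' hr.ne']; ring
      rw [this]
      calc |(K0 (α * r) + Real.log (α * r)) - Real.log r|
          ≤ |K0 (α * r) + Real.log (α * r)| + |Real.log r| := abs_sub _ _
        _ ≤ 2 + |Real.log r| := by linarith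
    · -- 1 < α r
      have h1 : 1 ≤ α * r := (not_le.mp h).le
      have := K0_le_two_of_one_le h1
      have := K0_nonneg (α * r)
      calc |K0 (α * r) + Real.log α| ≤ |K0 (α * r)| + |Real.log α| := abs_add_le _ _
        _ ≤ 2 + |Real.log α| := by rw [abs_of_nonneg (K0_nonneg _)]; linarith
  calc |K0 (α * r) + Real.log α| / (2 * Real.pi) ≤ |K0 (α * r) + Real.log α| / 1 := by
        apply div_le_div_of_nonneg_left (abs_nonneg _) one_pos hpi
  _ = |K0 (α * r) + Real.log α| := div_one _
  _ ≤ _ := habs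
noncomputable def Wf (V : E2 → ℝ) (x : E2) : ℝ≥0∞ := ENNReal.ofReal |V x|

noncomputable def Lf (x : E2) : ℝ := Real.log (max 1 ‖x‖)

noncomputable def Uf (s : ℝ) (V : E2 → ℝ) (x : E2) : ℝ≥0∞ :=
  ENNReal.ofReal (|V x| * (1 + Lf x ^ s))

lemma Lf_nonneg (x : E2) : 0 ≤ Lf x := Real.log_nonneg (le_max_left _ _)

lemma rpow_subadd {a b : ℝ} (s : ℝ) (ha : 0 ≤ a) (hb : 0 ≤ b) (hs : 0 ≤ s) (hs1 : s ≤ 1) :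
    (a + b) ^ s ≤ a ^ s + b ^ s := by
  have h := NNReal.rpow_add_le_add_rpow a.toNNReal b.toNNReal hs hs1
  calc (a + b) ^ s = ((a.toNNReal + b.toNNReal : ℝ≥0) : ℝ) ^ s := by
        rw [NNReal.coe_add, Real.coe_toNNReal _ ha, Real.coe_toNNReal _ hb]
  _ = (((a.toNNReal + b.toNNReal) ^ s : ℝ≥0) : ℝ) := (NNReal.coe_rpow _ _).symm
  _ ≤ ((a.toNNReal ^ s + b.toNNReal ^ s : ℝ≥0) : ℝ) := NNReal.coe_le_coe.mpr h
  _ = a ^ s + b ^ s := by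
      rw [NNReal.coe_add, NNReal.coe_rpow, NNReal.coe_rpow,
        Real.coe_toNNReal _ ha, Real.coe_toNNReal _ hb]


lemma ofReal_c_mul_ab {c a b : ℝ} (hc : 0 ≤ c) (ha : 0 ≤ a) :
    ENNReal.ofReal (c * (a * b)) = ENNReal.ofReal c * (ENNReal.ofReal a * ENNReal.ofReal b) := by
  rw [ENNReal.ofReal_mul hc, ENNReal.ofReal_mul ha]

lemma case3_aux (s : ℝ) (hs0 : 0 ≤ s) (hs1 : s ≤ 1) {α : ℝ} {x y : E2}
    (hα : 0 < α) (hr : 0 < ‖x - y‖)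
    (hcase : α * ‖x - y‖ ≤ 1) (hlr1 : 1 ≤ Real.log ‖x - y‖) :
    (Real.log ‖x - y‖) ^ 2
      ≤ (-Real.log α) ^ (2 - s) * ((1 + Lf x ^ s) * (1 + Lf y ^ s)) := by
  set r : ℝ := ‖x - y‖ with hrdef
  have hlr0 : 0 < Real.log r := lt_of_lt_of_le one_pos hlr1
  have hlrα : Real.log r ≤ -Real.log α := by
    have h1 : r ≤ α⁻¹ := by
      have h2 : α⁻¹ * (α * r) = r := by field_simp
      calc r = α⁻¹ * (α * r) := h2.symm
      _ ≤ α⁻¹ * 1 := mul_le_mul_of_nonneg_left hcase (inv_nonneg.mpr hα.le)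
      _ = α⁻¹ := mul_one _
    calc Real.log r ≤ Real.log α⁻¹ := Real.log_le_log hr h1
    _ = -Real.log α := Real.log_inv α
  set X : ℝ := (-Real.log α) ^ (2 - s) with hX
  have hX0 : 0 ≤ X := Real.rpow_nonneg (by linarith) _
  have hsq : (Real.log r) ^ 2 ≤ X * (Real.log r) ^ s := by
    have e1 : (Real.log r) ^ 2 = (Real.log r) ^ (2 - s) * (Real.log r) ^ s := by
      rw [← Real.rpow_natCast (Real.log r) 2,
        show ((2:ℕ):ℝ) = (2 - s) + s by push_cast; ring,
        Real.rpow_add hlr0]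
    rw [e1]
    exact mul_le_mul_of_nonneg_right
      (Real.rpow_le_rpow hlr0.le hlrα (by linarith))
      (Real.rpow_nonneg hlr0.le _)
  have hmx1 : (1:ℝ) ≤ max 1 ‖x‖ := le_max_left _ _
  have hmy1 : (1:ℝ) ≤ max 1 ‖y‖ := le_max_left _ _
  have hrle : r ≤ 2 * (max 1 ‖x‖ * max 1 ‖y‖) := by
    have h1 : r ≤ ‖x‖ + ‖y‖ := norm_sub_le x y
    have h2 : ‖x‖ ≤ max 1 ‖x‖ := le_max_right _ _
    have h3 : ‖y‖ ≤ max 1 ‖y‖ := le_max_right _ _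
    nlinarith [mul_nonneg (sub_nonneg.mpr hmx1) (sub_nonneg.mpr hmy1)]
  have hlog2 : Real.log 2 ≤ 1 := by
    have := Real.log_le_sub_one_of_pos (x := 2) (by norm_num); linarith
  have hlogr : Real.log r ≤ 1 + (Lf x + Lf y) := by
    calc Real.log r ≤ Real.log (2 * (max 1 ‖x‖ * max 1 ‖y‖)) := Real.log_le_log hr hrle
    _ = Real.log 2 + (Real.log (max 1 ‖x‖) + Real.log (max 1 ‖y‖)) := by
        rw [Real.log_mul two_ne_zero (by positivity),
          Real.log_mul (by positivity) (by positivity)]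
    _ ≤ 1 + (Lf x + Lf y) := by
        simp only [Lf]; linarith
  have hrs : (Real.log r) ^ s ≤ (1 + Lf x ^ s) * (1 + Lf y ^ s) := by
    have h4 : (Real.log r) ^ s ≤ (1 + Lf x + Lf y) ^ s :=
      Real.rpow_le_rpow hlr0.le (by linarith) hs0
    have h5 : (1 + Lf x + Lf y) ^ s ≤ (1 + Lf x) ^ s + Lf y ^ s :=
      rpow_subadd s (by nlinarith [Lf_nonneg x]) (Lf_nonneg y) hs0 hs1
    have h6 : (1 + Lf x) ^ s ≤ 1 + Lf x ^ s := by
      have := rpow_subadd s zero_le_one (Lf_nonneg x) hs0 hs1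
      rwa [Real.one_rpow] at this
    have h7 : 0 ≤ Lf x ^ s := Real.rpow_nonneg (Lf_nonneg x) s
    have h8 : 0 ≤ Lf y ^ s := Real.rpow_nonneg (Lf_nonneg y) s
    nlinarith
  calc (Real.log r) ^ 2 ≤ X * (Real.log r) ^ s := hsq
  _ ≤ X * ((1 + Lf x ^ s) * (1 + Lf y ^ s)) := mul_le_mul_of_nonneg_left hrs hX0

lemma diag_null : (volume : Measure (E2 × E2)) {p : E2 × E2 | p.1 = p.2} = 0 := by
  have hmeas : MeasurableSet {p : E2 × E2 | p.1 = p.2} := by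
    have h : {p : E2 × E2 | p.1 = p.2} = (fun p : E2 × E2 => p.1 - p.2) ⁻¹' {0} := by
      ext p; simp [sub_eq_zero]
    rw [h]
    exact (continuous_fst.sub continuous_snd).measurable (measurableSet_singleton 0)
  rw [Measure.volume_eq_prod, Measure.prod_apply hmeas]
  have h0 : ∀ x : E2, (volume (Prod.mk x ⁻¹' {p : E2 × E2 | p.1 = p.2})) = 0 := by
    intro x
    have h : (Prod.mk x ⁻¹' {p : E2 × E2 | p.1 = p.2}) = {x} := by
      ext y; simp [eq_comm]
    rw [h, measure_singleton]
  simp [h0]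

lemma norm_gt_measurable (c : ℝ) : MeasurableSet {x : E2 | c < ‖x‖} :=
  measurableSet_lt measurable_const measurable_norm

lemma tail_small {U : E2 → ℝ≥0∞} (hU : ∫⁻ x, U x < ⊤) {δ : ℝ≥0∞} (hδ : 0 < δ) :
    ∃ ρ : ℝ, Real.exp 1 ≤ ρ ∧ ∫⁻ x in {x : E2 | ρ < ‖x‖}, U x < δ := by
  set ν := (volume : Measure E2).withDensity U with hν
  have happ : ∀ c : ℝ, ν {x : E2 | c < ‖x‖} = ∫⁻ x in {x : E2 | c < ‖x‖}, U x := fun c =>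
    withDensity_apply _ (norm_gt_measurable c)
  set S : ℕ → Set E2 := fun n => {x : E2 | (Real.exp 1 + n : ℝ) < ‖x‖} with hS
  have hanti : Antitone S := by
    intro n m hnm x hx
    simp only [hS, Set.mem_setOf_eq] at hx ⊢
    have : (n : ℝ) ≤ m := Nat.cast_le.mpr hnm
    linarith
  have hempty : (⋂ n, S n) = ∅ := by
    ext x
    simp only [Set.mem_iInter, Set.mem_empty_iff_false, iff_false, not_forall, hS,
      Set.mem_setOf_eq, not_lt]
    obtain ⟨n, hn⟩ := exists_nat_ge ‖x‖
    refine ⟨n, ?_⟩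
    have he := (Real.exp_pos 1).le
    linarith
  have hfin : ν (S 0) ≠ ⊤ := by
    refine ne_of_lt (lt_of_le_of_lt (measure_mono (Set.subset_univ _)) ?_)
    rw [hν, withDensity_apply _ MeasurableSet.univ, Measure.restrict_univ]
    exact hU
  have htend := tendsto_measure_iInter_atTop
    (fun n => (norm_gt_measurable _).nullMeasurableSet) hanti ⟨0, hfin⟩
  rw [hempty, measure_empty] at htend
  obtain ⟨n, hn⟩ := (htend.eventually_lt_const hδ).exists
  refine ⟨Real.exp 1 + n, le_add_of_nonneg_right n.cast_nonneg, ?_⟩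
  rw [← happ]
  exact hn

lemma prod_region_fst {A : Set E2} (hA : MeasurableSet A) {F H : E2 → ℝ≥0∞}
    (hF : AEMeasurable F (volume : Measure E2)) (hH : AEMeasurable H (volume : Measure E2)) :
    (∫⁻ p : E2 × E2 in (A ×ˢ Set.univ), F p.1 * H p.2) = (∫⁻ x in A, F x) * ∫⁻ x, H x := by
  rw [Measure.volume_eq_prod, ← Measure.prod_restrict, Measure.restrict_univ,
    lintegral_prod_mul (hF.restrict) hH]

lemma prod_region_snd {A : Set E2} (hA : MeasurableSet A) {F H : E2 → ℝ≥0∞}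
    (hF : AEMeasurable F (volume : Measure E2)) (hH : AEMeasurable H (volume : Measure E2)) :
    (∫⁻ p : E2 × E2 in (Set.univ ×ˢ A), F p.1 * H p.2) = (∫⁻ x, F x) * ∫⁻ x in A, H x := by
  rw [Measure.volume_eq_prod, ← Measure.prod_restrict, Measure.restrict_univ,
    lintegral_prod_mul hF (hH.restrict)]

set_option maxHeartbeats 1000000 in
lemma master_ae (s : ℝ) (hs0 : 0 ≤ s) (hs1 : s ≤ 1) (V : E2 → ℝ) {α R : ℝ}
    (hα : 0 < α) (hR : Real.exp 1 ≤ R) :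
    ∀ᵐ p : E2 × E2, ENNReal.ofReal (|V p.1| * |G p.1 p.2 α - g α| ^ 2 * |V p.2|) ≤
      ENNReal.ofReal 8 * (Wf V p.1 * Wf V p.2)
      + ENNReal.ofReal 2 * ({q : E2 × E2 | ‖q.1 - q.2‖ < Real.exp 1}.indicator
          (fun q => Wf V q.1 * ENNReal.ofReal ((Real.log ‖q.1 - q.2‖) ^ 2) * Wf V q.2) p)
      + ENNReal.ofReal (2 * (Real.log R) ^ 2) * (Wf V p.1 * Wf V p.2)
      + ENNReal.ofReal (2 * (-Real.log α) ^ (2 - s))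
          * ({q : E2 × E2 | R < ‖q.1 - q.2‖}.indicator (fun q => Uf s V q.1 * Uf s V q.2) p)
      + ENNReal.ofReal (2 * (Real.log α) ^ 2)
          * ({q : E2 × E2 | 1 < α * ‖q.1 - q.2‖}.indicator
              (fun q => Wf V q.1 * Wf V q.2) p) := by
  have hdiag : ∀ᵐ p : E2 × E2, p.1 ≠ p.2 := by
    rw [ae_iff]
    simpa using diag_null
  filter_upwards [hdiag] with p hp
  set x := p.1
  set y := p.2
  set r : ℝ := ‖x - y‖ with hrdef
  have hr : 0 < r := by simpa [hrdef, sub_eq_zero] using hp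
  set a : ℝ := |V x| with hadef
  set b : ℝ := |V y| with hbdef
  have ha : 0 ≤ a := abs_nonneg _
  have hb : 0 ≤ b := abs_nonneg _
  have hab : 0 ≤ a * b := mul_nonneg ha hb
  set B : ℝ := if α * r ≤ 1 then |Real.log r| else |Real.log α| with hBdef
  have hB : 0 ≤ B := by rw [hBdef]; split_ifs <;> exact abs_nonneg _
  have hGb : |G x y α - g α| ≤ 2 + B := G_sub_g_abs_le hα hp
  have hz : |G x y α - g α| ^ 2 ≤ 8 + 2 * B ^ 2 := by
    have h1 : |G x y α - g α| ^ 2 ≤ (2 + B) ^ 2 :=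
      pow_le_pow_left₀ (abs_nonneg _) hGb 2
    nlinarith [sq_nonneg (B - 2)]
  have hf : a * |G x y α - g α| ^ 2 * b ≤ 8 * (a * b) + 2 * B ^ 2 * (a * b) := by
    have h1 : a * |G x y α - g α| ^ 2 * b ≤ a * (8 + 2 * B ^ 2) * b := by
      apply mul_le_mul_of_nonneg_right (mul_le_mul_of_nonneg_left hz ha) hb
    nlinarith
  set T1 : ℝ≥0∞ := ENNReal.ofReal 8 * (Wf V x * Wf V y) with hT1
  set T2 : ℝ≥0∞ := ENNReal.ofReal 2 * ({q : E2 × E2 | ‖q.1 - q.2‖ < Real.exp 1}.indicator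
      (fun q => Wf V q.1 * ENNReal.ofReal ((Real.log ‖q.1 - q.2‖) ^ 2) * Wf V q.2) p) with hT2
  set T3 : ℝ≥0∞ := ENNReal.ofReal (2 * (Real.log R) ^ 2) * (Wf V x * Wf V y) with hT3
  set T4 : ℝ≥0∞ := ENNReal.ofReal (2 * (-Real.log α) ^ (2 - s))
      * ({q : E2 × E2 | R < ‖q.1 - q.2‖}.indicator (fun q => Uf s V q.1 * Uf s V q.2) p) with hT4
  set T5 : ℝ≥0∞ := ENNReal.ofReal (2 * (Real.log α) ^ 2)
      * ({q : E2 × E2 | 1 < α * ‖q.1 - q.2‖}.indicator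
          (fun q => Wf V q.1 * Wf V q.2) p) with hT5
  have hofT1 : ENNReal.ofReal (8 * (a * b)) = T1 := by
    rw [hT1, ofReal_c_mul_ab (by norm_num) ha]; rfl
  show ENNReal.ofReal (a * |G x y α - g α| ^ 2 * b) ≤ T1 + T2 + T3 + T4 + T5
  by_cases hcase : α * r ≤ 1
  · have hBsq : B ^ 2 = (Real.log r) ^ 2 := by rw [hBdef, if_pos hcase, sq_abs]
    rw [hBsq] at hf
    by_cases hre : r < Real.exp 1
    · -- case 1 : small r, rolling term T2
      have hmem : p ∈ {q : E2 × E2 | ‖q.1 - q.2‖ < Real.exp 1} := hre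
      have hf2 : a * |G x y α - g α| ^ 2 * b
          ≤ 8 * (a * b) + 2 * (a * (Real.log r) ^ 2 * b) := by
        refine hf.trans (le_of_eq ?_); ring
      have hle : ENNReal.ofReal (a * |G x y α - g α| ^ 2 * b) ≤ T1 + T2 := by
        refine le_trans (ENNReal.ofReal_le_ofReal hf2) ?_
        refine le_trans ENNReal.ofReal_add_le ?_
        rw [hofT1]
        refine add_le_add_right (le_of_eq ?_) T1
        rw [hT2, Set.indicator_of_mem hmem,
          ENNReal.ofReal_mul (by norm_num : (0:ℝ) ≤ 2),
          ENNReal.ofReal_mul (by positivity : (0:ℝ) ≤ a * (Real.log r)^2),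
          ENNReal.ofReal_mul ha]
        rfl
      exact hle.trans (le_add_right (le_add_right (le_add_right le_rfl)))
    · have hlr1 : 1 ≤ Real.log r := by
        rw [show (1:ℝ) = Real.log (Real.exp 1) by rw [Real.log_exp]]
        exact Real.log_le_log (Real.exp_pos 1) (not_lt.mp hre)
      have hlr0 : 0 < Real.log r := lt_of_lt_of_le one_pos hlr1
      by_cases hrR : r ≤ R
      · -- case 2 : medium r, constant term T3
        have hlrR : Real.log r ≤ Real.log R := Real.log_le_log hr hrR
        have hsq : (Real.log r) ^ 2 ≤ (Real.log R) ^ 2 := by nlinarith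
        have hf2 : a * |G x y α - g α| ^ 2 * b
            ≤ 8 * (a * b) + (2 * (Real.log R) ^ 2) * (a * b) := by
          refine hf.trans ?_
          nlinarith [mul_le_mul_of_nonneg_right hsq hab]
        have hle : ENNReal.ofReal (a * |G x y α - g α| ^ 2 * b) ≤ T1 + T3 := by
          refine le_trans (ENNReal.ofReal_le_ofReal hf2) ?_
          refine le_trans ENNReal.ofReal_add_le ?_
          rw [hofT1]
          refine add_le_add_right (le_of_eq ?_) T1
          rw [hT3, ofReal_c_mul_ab (by positivity) ha]
          rfl
        refine hle.trans ?_
        exact le_trans (add_le_add (le_self_add (b := T2)) le_rfl)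
          (le_add_right (le_add_right le_rfl))
      · -- case 3 : large r with αr ≤ 1 : term T4
        have hRlt : R < r := not_le.mp hrR
        have hmem : p ∈ {q : E2 × E2 | R < ‖q.1 - q.2‖} := hRlt
        have hkey := case3_aux s hs0 hs1 (x := x) (y := y) hα hr hcase hlr1
        have hnl : (0:ℝ) ≤ -Real.log α := by
          have h0 : Real.log (α * r) ≤ 0 := Real.log_nonpos (by positivity) hcase
          rw [Real.log_mul hα.ne' hr.ne'] at h0
          linarith
        have hf2 : a * |G x y α - g α| ^ 2 * b
            ≤ 8 * (a * b)
              + (2 * (-Real.log α) ^ (2 - s))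
                * ((a * (1 + Lf x ^ s)) * (b * (1 + Lf y ^ s))) := by
          refine hf.trans ?_
          have hm2 := mul_le_mul_of_nonneg_right hkey hab
          nlinarith [hm2]
        have hle : ENNReal.ofReal (a * |G x y α - g α| ^ 2 * b) ≤ T1 + T4 := by
          refine le_trans (ENNReal.ofReal_le_ofReal hf2) ?_
          refine le_trans ENNReal.ofReal_add_le ?_
          rw [hofT1]
          refine add_le_add_right (le_of_eq ?_) T1
          rw [hT4, Set.indicator_of_mem hmem,
            ofReal_c_mul_ab
              (mul_nonneg (by norm_num) (Real.rpow_nonneg hnl _))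
              (mul_nonneg ha
                (by nlinarith [Real.rpow_nonneg (Lf_nonneg x) s] : (0:ℝ) ≤ 1 + Lf x ^ s))]
          rfl
        refine hle.trans ?_
        refine le_trans (add_le_add ?_ le_rfl) (le_add_right le_rfl)
        exact le_trans le_self_add (add_le_add le_self_add le_rfl)
  · -- case 4 : αr > 1 : term T5
    have hBsq : B ^ 2 = (Real.log α) ^ 2 := by rw [hBdef, if_neg hcase, sq_abs]
    rw [hBsq] at hf
    have hmem : p ∈ {q : E2 × E2 | 1 < α * ‖q.1 - q.2‖} := not_le.mp hcase
    have hf2 : a * |G x y α - g α| ^ 2 * b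
        ≤ 8 * (a * b) + (2 * (Real.log α) ^ 2) * (a * b) := by
      refine hf.trans (le_of_eq ?_); ring
    have hle : ENNReal.ofReal (a * |G x y α - g α| ^ 2 * b) ≤ T1 + T5 := by
      refine le_trans (ENNReal.ofReal_le_ofReal hf2) ?_
      refine le_trans ENNReal.ofReal_add_le ?_
      rw [hofT1]
      refine add_le_add_right (le_of_eq ?_) T1
      rw [hT5, Set.indicator_of_mem hmem, ofReal_c_mul_ab (by positivity) ha]
      rfl
    refine hle.trans ?_
    exact add_le_add (le_add_right (le_add_right (le_add_right le_rfl))) le_rfl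

set_option maxHeartbeats 2000000 in
lemma key_estimate (s : ℝ) (hs0 : 0 ≤ s) (hs1 : s ≤ 1) (V : E2 → ℝ)
    (hWae : AEMeasurable (Wf V) (volume : Measure E2))
    (hUae : AEMeasurable (Uf s V) (volume : Measure E2))
    {α ρ : ℝ} (hα : 0 < α) (hρe : Real.exp 1 ≤ ρ) (hαρ : α < 1 / (8 * ρ)) :
    (∫⁻ p : E2 × E2, ENNReal.ofReal (|V p.1| * |G p.1 p.2 α - g α| ^ 2 * |V p.2|))
      ≤ (ENNReal.ofReal 8 * ((∫⁻ x, Wf V x) * (∫⁻ x, Wf V x))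
        + ENNReal.ofReal 2 * (∫⁻ p : E2 × E2 in {p : E2 × E2 | ‖p.1 - p.2‖ < Real.exp 1},
            ENNReal.ofReal (|V p.1| * (Real.log ‖p.1 - p.2‖) ^ 2 * |V p.2|))
        + ENNReal.ofReal (2 * (Real.log (2 * ρ)) ^ 2) * ((∫⁻ x, Wf V x) * (∫⁻ x, Wf V x)))
      + ENNReal.ofReal ((-Real.log α) ^ (2 - s))
          * (16 * ((∫⁻ x in {x : E2 | ρ < ‖x‖}, Uf s V x) * (∫⁻ x, Uf s V x))) := by
  -- basic facts about the parameters
  have hexp1 : (1:ℝ) ≤ Real.exp 1 := by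
    have := Real.add_one_le_exp 1; linarith
  have hρ0 : 0 < ρ := lt_of_lt_of_le (lt_of_lt_of_le one_pos hexp1) hρe
  have hρ1 : 1 ≤ ρ := le_trans hexp1 hρe
  have h8ρ : (1:ℝ) < 8 * ρ := by nlinarith
  have hα1 : α < 1 := by
    have h1 : 1 / (8 * ρ) ≤ 1 := by
      rw [div_le_one (by linarith)]; linarith
    linarith
  have hlogα : 0 < -Real.log α := by
    have := Real.log_neg hα hα1; linarith
  set R : ℝ := 2 * ρ with hRdef
  have hRe : Real.exp 1 ≤ R := by nlinarith
  -- abbreviations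
  set W := Wf V with hWdef
  set U := Uf s V with hUdef
  set IW := ∫⁻ x, W x with hIW
  set S0 := ∫⁻ x, U x with hS0
  set σ := ∫⁻ x in {x : E2 | ρ < ‖x‖}, U x with hσ
  have hσS0 : σ ≤ S0 := by
    rw [hσ, hS0]; exact setLIntegral_le_lintegral _ _
  have hWleU : ∀ x, W x ≤ U x := fun x => by
    rw [hWdef, hUdef]
    refine ENNReal.ofReal_le_ofReal ?_
    have := Real.rpow_nonneg (Lf_nonneg x) s
    nlinarith [abs_nonneg (V x)]
  have hIWS0 : IW ≤ S0 := lintegral_mono hWleU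
  -- measurability on the product space
  have hW1 : AEMeasurable (fun p : E2 × E2 => W p.1) volume :=
    hWae.comp_quasiMeasurePreserving Measure.quasiMeasurePreserving_fst
  have hW2 : AEMeasurable (fun p : E2 × E2 => W p.2) volume :=
    hWae.comp_quasiMeasurePreserving Measure.quasiMeasurePreserving_snd
  have hU1 : AEMeasurable (fun p : E2 × E2 => U p.1) volume :=
    hUae.comp_quasiMeasurePreserving Measure.quasiMeasurePreserving_fst
  have hU2 : AEMeasurable (fun p : E2 × E2 => U p.2) volume :=
    hUae.comp_quasiMeasurePreserving Measure.quasiMeasurePreserving_snd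
  have hrm : Measurable (fun p : E2 × E2 => ‖p.1 - p.2‖) :=
    (continuous_norm.comp (continuous_fst.sub continuous_snd)).measurable
  have hmD : MeasurableSet {q : E2 × E2 | ‖q.1 - q.2‖ < Real.exp 1} :=
    measurableSet_lt hrm measurable_const
  have hmR : MeasurableSet {q : E2 × E2 | R < ‖q.1 - q.2‖} :=
    measurableSet_lt measurable_const hrm
  have hmA : MeasurableSet {q : E2 × E2 | 1 < α * ‖q.1 - q.2‖} :=
    measurableSet_lt measurable_const (measurable_const.mul hrm)
  -- the five pieces
  set t1 : E2 × E2 → ℝ≥0∞ := fun p => ENNReal.ofReal 8 * (W p.1 * W p.2) with ht1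
  set t2 : E2 × E2 → ℝ≥0∞ := fun p =>
    ENNReal.ofReal 2 * ({q : E2 × E2 | ‖q.1 - q.2‖ < Real.exp 1}.indicator
      (fun q => W q.1 * ENNReal.ofReal ((Real.log ‖q.1 - q.2‖) ^ 2) * W q.2) p) with ht2
  set t3 : E2 × E2 → ℝ≥0∞ := fun p =>
    ENNReal.ofReal (2 * (Real.log R) ^ 2) * (W p.1 * W p.2) with ht3
  set t4 : E2 × E2 → ℝ≥0∞ := fun p => ENNReal.ofReal (2 * (-Real.log α) ^ (2 - s))
      * ({q : E2 × E2 | R < ‖q.1 - q.2‖}.indicator (fun q => U q.1 * U q.2) p) with ht4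
  set t5 : E2 × E2 → ℝ≥0∞ := fun p => ENNReal.ofReal (2 * (Real.log α) ^ 2)
      * ({q : E2 × E2 | 1 < α * ‖q.1 - q.2‖}.indicator (fun q => W q.1 * W q.2) p) with ht5
  have hm1 : AEMeasurable t1 volume := aemeasurable_const.mul (hW1.mul hW2)
  have hm2 : AEMeasurable t2 volume := by
    refine aemeasurable_const.mul (AEMeasurable.indicator ?_ hmD)
    exact (hW1.mul ((ENNReal.measurable_ofReal.comp
      ((Real.measurable_log.comp hrm).pow_const 2)).aemeasurable)).mul hW2
  have hm3 : AEMeasurable t3 volume := aemeasurable_const.mul (hW1.mul hW2)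
  have hm4 : AEMeasurable t4 volume :=
    aemeasurable_const.mul (AEMeasurable.indicator (hU1.mul hU2) hmR)
  have hm5 : AEMeasurable t5 volume :=
    aemeasurable_const.mul (AEMeasurable.indicator (hW1.mul hW2) hmA)
  -- step 1 : master bound
  have step1 : (∫⁻ p : E2 × E2, ENNReal.ofReal (|V p.1| * |G p.1 p.2 α - g α| ^ 2 * |V p.2|))
      ≤ ∫⁻ p, (t1 p + t2 p + t3 p + t4 p + t5 p) := by
    refine lintegral_mono_ae ?_
    filter_upwards [master_ae s hs0 hs1 V hα hRe] with p hp
    exact hp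
  -- step 2 : split the sum
  have step2 : (∫⁻ p, (t1 p + t2 p + t3 p + t4 p + t5 p))
      = (∫⁻ p, t1 p) + (∫⁻ p, t2 p) + (∫⁻ p, t3 p) + (∫⁻ p, t4 p) + (∫⁻ p, t5 p) := by
    rw [lintegral_add_left' (f := fun p => t1 p + t2 p + t3 p + t4 p) (((hm1.add hm2).add hm3).add hm4) t5,
      lintegral_add_left' (f := fun p => t1 p + t2 p + t3 p) ((hm1.add hm2).add hm3) t4,
      lintegral_add_left' (f := fun p => t1 p + t2 p) (hm1.add hm2) t3,
      lintegral_add_left' hm1 t2]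
  -- step 3 : the product integrals
  have hWW : (∫⁻ p : E2 × E2, W p.1 * W p.2) = IW * IW := by
    rw [Measure.volume_eq_prod]; exact lintegral_prod_mul hWae hWae
  have e1 : (∫⁻ p, t1 p) = ENNReal.ofReal 8 * (IW * IW) := by
    rw [ht1, lintegral_const_mul' _ _ ENNReal.ofReal_ne_top, hWW]
  have e2 : (∫⁻ p, t2 p) = ENNReal.ofReal 2
      * (∫⁻ p : E2 × E2 in {p : E2 × E2 | ‖p.1 - p.2‖ < Real.exp 1},
          ENNReal.ofReal (|V p.1| * (Real.log ‖p.1 - p.2‖) ^ 2 * |V p.2|)) := by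
    rw [ht2, lintegral_const_mul' _ _ ENNReal.ofReal_ne_top, lintegral_indicator hmD]
    congr 1
    refine lintegral_congr fun p => ?_
    rw [ENNReal.ofReal_mul (by positivity : (0:ℝ) ≤ |V p.1| * (Real.log ‖p.1 - p.2‖) ^ 2),
      ENNReal.ofReal_mul (abs_nonneg _)]
    rfl
  have e3 : (∫⁻ p, t3 p) = ENNReal.ofReal (2 * (Real.log R) ^ 2) * (IW * IW) := by
    rw [ht3, lintegral_const_mul' _ _ ENNReal.ofReal_ne_top, hWW]
  have e4 : (∫⁻ p, t4 p) = ENNReal.ofReal (2 * (-Real.log α) ^ (2 - s))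
      * (∫⁻ p : E2 × E2 in {q : E2 × E2 | R < ‖q.1 - q.2‖}, U p.1 * U p.2) := by
    rw [ht4, lintegral_const_mul' _ _ ENNReal.ofReal_ne_top, lintegral_indicator hmR]
  have e5 : (∫⁻ p, t5 p) = ENNReal.ofReal (2 * (Real.log α) ^ 2)
      * (∫⁻ p : E2 × E2 in {q : E2 × E2 | 1 < α * ‖q.1 - q.2‖}, W p.1 * W p.2) := by
    rw [ht5, lintegral_const_mul' _ _ ENNReal.ofReal_ne_top, lintegral_indicator hmA]
  -- step 4 : region bound for t4
  have hsub4 : {q : E2 × E2 | R < ‖q.1 - q.2‖}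
      ⊆ ({x : E2 | ρ < ‖x‖} ×ˢ Set.univ) ∪ (Set.univ ×ˢ {x : E2 | ρ < ‖x‖}) := by
    intro p hp
    simp only [Set.mem_setOf_eq] at hp
    by_contra hcon
    simp only [Set.mem_union, Set.mem_prod, Set.mem_univ, and_true, true_and,
      Set.mem_setOf_eq, not_or, not_lt] at hcon
    have h1 : ‖p.1 - p.2‖ ≤ ‖p.1‖ + ‖p.2‖ := norm_sub_le _ _
    rw [hRdef] at hp
    linarith [hcon.1, hcon.2]
  have hA4 : (∫⁻ p : E2 × E2 in {q : E2 × E2 | R < ‖q.1 - q.2‖}, U p.1 * U p.2)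
      ≤ σ * S0 + S0 * σ := by
    refine le_trans (lintegral_mono_set hsub4) ?_
    refine le_trans (lintegral_union_le _ _ _) ?_
    rw [prod_region_fst (norm_gt_measurable ρ) hUae hUae,
      prod_region_snd (norm_gt_measurable ρ) hUae hUae]
  -- step 5 : region bound for t5, with the tail estimate
  set β : ℝ := 1 / (2 * α) with hβ
  have hβpos : 0 < β := by rw [hβ]; positivity
  have hsub5 : {q : E2 × E2 | 1 < α * ‖q.1 - q.2‖}
      ⊆ ({x : E2 | β < ‖x‖} ×ˢ Set.univ) ∪ (Set.univ ×ˢ {x : E2 | β < ‖x‖}) := by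
    intro p hp
    simp only [Set.mem_setOf_eq] at hp
    by_contra hcon
    simp only [Set.mem_union, Set.mem_prod, Set.mem_univ, and_true, true_and,
      Set.mem_setOf_eq, not_or, not_lt] at hcon
    have h1 : ‖p.1 - p.2‖ ≤ ‖p.1‖ + ‖p.2‖ := norm_sub_le _ _
    have h2 : ‖p.1 - p.2‖ ≤ 2 * β := by linarith [hcon.1, hcon.2]
    rw [hβ] at h2
    have : α * ‖p.1 - p.2‖ ≤ 1 := by
      rw [show (2:ℝ) * (1 / (2*α)) = 1/α by field_simp] at h2
      calc α * ‖p.1 - p.2‖ ≤ α * (1/α) := mul_le_mul_of_nonneg_left h2 hα.le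
      _ = 1 := by field_simp
    linarith
  -- τ and the weight estimate
  set τ : ℝ := -Real.log (2 * α) with hτ
  have h2α : 2 * α < 1 / (4 * ρ) := by
    have : (2:ℝ) * (1 / (8 * ρ)) = 1 / (4 * ρ) := by field_simp; ring
    linarith
  have h4ρβ : 4 * ρ ≤ β := by
    rw [hβ, le_div_iff₀ (by positivity)]
    have h2 : (2 * α) * (4 * ρ) < (1 / (4 * ρ)) * (4 * ρ) :=
      mul_lt_mul_of_pos_right h2α (by positivity)
    rw [div_mul_cancel₀ 1 (by positivity : (4:ℝ) * ρ ≠ 0)] at h2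
    nlinarith
  have hρβ : ρ ≤ β := by linarith
  have hτ1 : 1 ≤ τ := by
    rw [hτ]
    have h1 : 2 * α ≤ Real.exp (-1) := by
      rw [Real.exp_neg]
      have : (1:ℝ)/(4*ρ) ≤ 1/Real.exp 1 := by
        apply div_le_div_of_nonneg_left one_pos.le (Real.exp_pos 1) ?_
        nlinarith
      calc 2*α ≤ 1/(4*ρ) := h2α.le
      _ ≤ 1 / Real.exp 1 := this
      _ = (Real.exp 1)⁻¹ := one_div _
    have h2 : Real.log (2*α) ≤ -1 := by
      calc Real.log (2*α) ≤ Real.log (Real.exp (-1)) := Real.log_le_log (by positivity) h1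
      _ = -1 := Real.log_exp _
    linarith
  have hτ0 : 0 < τ := lt_of_lt_of_le one_pos hτ1
  have hT : (∫⁻ x in {x : E2 | β < ‖x‖}, W x) ≤ ENNReal.ofReal (τ ^ (-s)) * σ := by
    have hpt : ∀ x ∈ {x : E2 | β < ‖x‖}, W x ≤ ENNReal.ofReal (τ ^ (-s)) * U x := by
      intro x hx
      simp only [Set.mem_setOf_eq] at hx
      have hxβ : β < ‖x‖ := hx
      have hx1 : 1 < ‖x‖ := by nlinarith
      have hLx : τ ≤ Lf x := by
        have hβτ : τ = Real.log β := by
          rw [hβ, hτ, one_div, Real.log_inv]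
        rw [hβτ, Lf, max_eq_right hx1.le]
        exact Real.log_le_log hβpos hxβ.le
      have hLs : τ ^ s ≤ Lf x ^ s := Real.rpow_le_rpow hτ0.le hLx hs0
      have hone : 1 ≤ τ ^ (-s) * (1 + Lf x ^ s) := by
        have h1 : τ ^ (-s) * τ ^ s = 1 := by
          rw [Real.rpow_neg hτ0.le, inv_mul_cancel₀ (ne_of_gt (Real.rpow_pos_of_pos hτ0 s))]
        have h2 : τ ^ (-s) * τ ^ s ≤ τ ^ (-s) * (1 + Lf x ^ s) := by
          apply mul_le_mul_of_nonneg_left ?_ (Real.rpow_nonneg hτ0.le _)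
          nlinarith [hLs]
        linarith
      rw [hWdef, hUdef]
      unfold Wf Uf
      rw [← ENNReal.ofReal_mul (Real.rpow_nonneg hτ0.le _)]
      refine ENNReal.ofReal_le_ofReal ?_
      calc |V x| = |V x| * 1 := (mul_one _).symm
      _ ≤ |V x| * (τ ^ (-s) * (1 + Lf x ^ s)) :=
          mul_le_mul_of_nonneg_left hone (abs_nonneg _)
      _ = τ ^ (-s) * (|V x| * (1 + Lf x ^ s)) := by ring
    calc (∫⁻ x in {x : E2 | β < ‖x‖}, W x)
        ≤ ∫⁻ x in {x : E2 | β < ‖x‖}, ENNReal.ofReal (τ ^ (-s)) * U x := by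
          refine lintegral_mono_ae ?_
          filter_upwards [ae_restrict_mem (norm_gt_measurable β)] with x hx
          exact hpt x hx
    _ = ENNReal.ofReal (τ ^ (-s)) * ∫⁻ x in {x : E2 | β < ‖x‖}, U x := by
          rw [lintegral_const_mul' _ _ ENNReal.ofReal_ne_top]
    _ ≤ ENNReal.ofReal (τ ^ (-s)) * σ := by
          refine mul_le_mul_right ?_ _
          rw [hσ]
          refine lintegral_mono_set ?_
          intro x hx
          simp only [Set.mem_setOf_eq] at hx ⊢
          linarith
  have hA5 : (∫⁻ p : E2 × E2 in {q : E2 × E2 | 1 < α * ‖q.1 - q.2‖}, W p.1 * W p.2)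
      ≤ ENNReal.ofReal (τ ^ (-s)) * σ * S0 + S0 * (ENNReal.ofReal (τ ^ (-s)) * σ) := by
    refine le_trans (lintegral_mono_set hsub5) ?_
    refine le_trans (lintegral_union_le _ _ _) ?_
    rw [prod_region_fst (norm_gt_measurable β) hWae hWae,
      prod_region_snd (norm_gt_measurable β) hWae hWae]
    exact add_le_add (mul_le_mul' hT hIWS0) (mul_le_mul' hIWS0 hT)
  -- step 6 : scalar inequality
  have hscal : 2 * (Real.log α) ^ 2 * τ ^ (-s) ≤ 4 * (-Real.log α) ^ (2 - s) := by
    have hlog2 : Real.log 2 ≤ 1 := by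
      have := Real.log_le_sub_one_of_pos (x := 2) (by norm_num); linarith
    have hlog2pos : 0 < Real.log 2 := Real.log_pos (by norm_num)
    have hτeq : τ = -Real.log α - Real.log 2 := by
      rw [hτ, Real.log_mul two_ne_zero hα.ne']; ring
    have hlogα2 : 2 * Real.log 2 ≤ -Real.log α := by
      have : 1 + Real.log 2 ≤ -Real.log α := by rw [hτeq] at hτ1; linarith
      linarith
    have hhalf : (-Real.log α) / 2 ≤ τ := by rw [hτeq]; linarith
    have hhalfpos : 0 < (-Real.log α) / 2 := by positivity
    have e1 : τ ^ (-s) ≤ ((-Real.log α) / 2) ^ (-s) :=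
      rpow_le_rpow_of_nonpos hhalfpos hhalf (neg_nonpos.mpr hs0)
    have e2 : ((-Real.log α) / 2) ^ (-s) = (-Real.log α) ^ (-s) * 2 ^ s := by
      rw [Real.div_rpow hlogα.le (by norm_num : (0:ℝ) ≤ 2),
        Real.rpow_neg (by norm_num : (0:ℝ) ≤ 2), div_eq_mul_inv, inv_inv]
    have e3 : (2:ℝ) ^ s ≤ 2 := by
      calc (2:ℝ) ^ s ≤ (2:ℝ) ^ (1:ℝ) := rpow_le_rpow_of_exponent_le one_le_two hs1
      _ = 2 := Real.rpow_one 2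
    have e5 : (-Real.log α) ^ 2 * (-Real.log α) ^ (-s) = (-Real.log α) ^ (2 - s) := by
      rw [← Real.rpow_natCast (-Real.log α) 2, ← Real.rpow_add hlogα,
        show ((2:ℕ):ℝ) + -s = 2 - s by push_cast; ring]
    have e6 : (Real.log α) ^ 2 = (-Real.log α) ^ 2 := by ring
    have hnn : 0 ≤ (-Real.log α) ^ (-s) := Real.rpow_nonneg hlogα.le _
    have hsq : 0 ≤ (-Real.log α) ^ 2 := sq_nonneg _
    calc 2 * (Real.log α) ^ 2 * τ ^ (-s)
        = 2 * ((-Real.log α) ^ 2 * τ ^ (-s)) := by rw [e6]; ring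
    _ ≤ 2 * ((-Real.log α) ^ 2 * (((-Real.log α))/2) ^ (-s)) := by
        have := mul_le_mul_of_nonneg_left e1 hsq
        linarith
    _ = 2 * ((-Real.log α) ^ 2 * ((-Real.log α) ^ (-s) * 2 ^ s)) := by rw [e2]
    _ ≤ 2 * ((-Real.log α) ^ 2 * ((-Real.log α) ^ (-s) * 2)) := by
        have h7 : (-Real.log α) ^ 2 * ((-Real.log α) ^ (-s) * 2 ^ s)
            ≤ (-Real.log α) ^ 2 * ((-Real.log α) ^ (-s) * 2) := by
          apply mul_le_mul_of_nonneg_left ?_ hsq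
          apply mul_le_mul_of_nonneg_left e3 hnn
        linarith
    _ = 4 * ((-Real.log α) ^ 2 * (-Real.log α) ^ (-s)) := by ring
    _ = 4 * (-Real.log α) ^ (2 - s) := by rw [e5]
  -- assemble everything
  set X : ℝ≥0∞ := ENNReal.ofReal ((-Real.log α) ^ (2 - s)) with hX
  have hfin4 : ENNReal.ofReal (2 * (-Real.log α) ^ (2 - s))
      * (∫⁻ p : E2 × E2 in {q : E2 × E2 | R < ‖q.1 - q.2‖}, U p.1 * U p.2)
      ≤ X * (4 * (σ * S0)) := by
    refine le_trans (mul_le_mul_right hA4 _) ?_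
    have hc : ENNReal.ofReal (2 * (-Real.log α) ^ (2 - s)) = 2 * X := by
      rw [hX, ENNReal.ofReal_mul (by norm_num : (0:ℝ) ≤ 2), ENNReal.ofReal_ofNat]
    rw [hc]
    exact le_of_eq (by ring)
  have hfin5 : ENNReal.ofReal (2 * (Real.log α) ^ 2)
      * (∫⁻ p : E2 × E2 in {q : E2 × E2 | 1 < α * ‖q.1 - q.2‖}, W p.1 * W p.2)
      ≤ X * (8 * (σ * S0)) := by
    refine le_trans (mul_le_mul_right hA5 _) ?_
    have hr1 : ENNReal.ofReal (2 * (Real.log α) ^ 2)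
        * (ENNReal.ofReal (τ ^ (-s)) * σ * S0 + S0 * (ENNReal.ofReal (τ ^ (-s)) * σ))
        = (ENNReal.ofReal (2 * (Real.log α) ^ 2) * ENNReal.ofReal (τ ^ (-s)))
            * (σ * S0 + S0 * σ) := by ring
    rw [hr1, ← ENNReal.ofReal_mul (by positivity)]
    have hr2 : ENNReal.ofReal (2 * (Real.log α) ^ 2 * τ ^ (-s))
        ≤ ENNReal.ofReal (4 * (-Real.log α) ^ (2 - s)) := ENNReal.ofReal_le_ofReal hscal
    refine le_trans (mul_le_mul_left hr2 _) ?_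
    have hc : ENNReal.ofReal (4 * (-Real.log α) ^ (2 - s)) = 4 * X := by
      rw [hX, ENNReal.ofReal_mul (by norm_num : (0:ℝ) ≤ 4), ENNReal.ofReal_ofNat]
    rw [hc]
    exact le_of_eq (by ring)
  calc (∫⁻ p : E2 × E2, ENNReal.ofReal (|V p.1| * |G p.1 p.2 α - g α| ^ 2 * |V p.2|))
      ≤ (∫⁻ p, t1 p) + (∫⁻ p, t2 p) + (∫⁻ p, t3 p) + (∫⁻ p, t4 p) + (∫⁻ p, t5 p) := by
        rw [← step2]; exact step1
  _ ≤ (ENNReal.ofReal 8 * (IW * IW)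
        + ENNReal.ofReal 2 * (∫⁻ p : E2 × E2 in {p : E2 × E2 | ‖p.1 - p.2‖ < Real.exp 1},
            ENNReal.ofReal (|V p.1| * (Real.log ‖p.1 - p.2‖) ^ 2 * |V p.2|))
        + ENNReal.ofReal (2 * (Real.log R) ^ 2) * (IW * IW))
        + (X * (4 * (σ * S0)) + X * (8 * (σ * S0))) := by
        rw [e1, e2, e3, e4, e5]
        exact le_trans (add_le_add (add_le_add_right hfin4 _) hfin5)
          (le_of_eq (add_assoc _ _ _))
  _ ≤ _ := by
        refine add_le_add_right ?_ _
        calc X * (4 * (σ * S0)) + X * (8 * (σ * S0)) = X * (12 * (σ * S0)) := by ring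
        _ ≤ X * (16 * (σ * S0)) :=
            mul_le_mul_right (mul_le_mul_left (by norm_num) _) _

end HSaux
set_option maxHeartbeats 2000000 in
/-- If `s ∈ [0,1)` and `V ∈ L¹(ℝ²)` is real-valued and satisfies (V_ln_s) and
(V_roll), then as `α → 0+`
`∫∫ |V(x)|·|G(x,y;α) − g(α)|²·|V(y)| d(x,y) = o(|ln α|^{2−s})`;
in particular the squared Hilbert–Schmidt norm of the operator `M(α)` with kernel
`|V(x)|^{1/2}(G(x,y;α) − g(α))V(y)^{1/2}`, which equals this double integral,
is `o(|g(α)|^{2−s})`. -/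
theorem M_HS_norm_littleO (s : ℝ) (hs : s ∈ Set.Ico (0 : ℝ) 1)
    (V : EuclideanSpace ℝ (Fin 2) → ℝ) (hV : Integrable V)
    (hlns : ∫⁻ x in {x : EuclideanSpace ℝ (Fin 2) | 1 < ‖x‖},
      ENNReal.ofReal (|Real.log ‖x‖| ^ s * |V x|) < ⊤)
    (hroll : ∫⁻ p in {p : EuclideanSpace ℝ (Fin 2) × EuclideanSpace ℝ (Fin 2) |
        ‖p.1 - p.2‖ < Real.exp 1},
      ENNReal.ofReal (|V p.1| * (Real.log ‖p.1 - p.2‖) ^ 2 * |V p.2|) < ⊤) :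
    (fun α : ℝ => ∫ p : EuclideanSpace ℝ (Fin 2) × EuclideanSpace ℝ (Fin 2),
        |V p.1| * |G p.1 p.2 α - g α| ^ 2 * |V p.2|)
      =o[nhdsWithin 0 (Set.Ioi (0 : ℝ))] (fun α : ℝ => |Real.log α| ^ (2 - s)) ∧
    (fun α : ℝ => ∫ p : EuclideanSpace ℝ (Fin 2) × EuclideanSpace ℝ (Fin 2),
        |V p.1| * |G p.1 p.2 α - g α| ^ 2 * |V p.2|)
      =o[nhdsWithin 0 (Set.Ioi (0 : ℝ))] (fun α : ℝ => |g α| ^ (2 - s)) := by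
  obtain ⟨hs0, hs1⟩ := hs
  have hVae : AEMeasurable V (volume : Measure (EuclideanSpace ℝ (Fin 2))) :=
    hV.aestronglyMeasurable.aemeasurable
  have hVabs : AEMeasurable (fun x : EuclideanSpace ℝ (Fin 2) => |V x|) volume :=
    continuous_abs.measurable.comp_aemeasurable hVae
  have hWae : AEMeasurable (HSaux.Wf V) volume :=
    ENNReal.measurable_ofReal.comp_aemeasurable hVabs
  have hLfm : Measurable (HSaux.Lf) :=
    Real.measurable_log.comp (continuous_const.max continuous_norm).measurable
  have hUae : AEMeasurable (HSaux.Uf s V) volume :=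
    ENNReal.measurable_ofReal.comp_aemeasurable
      (hVabs.mul (measurable_const.add (hLfm.pow_const s)).aemeasurable)
  -- finiteness of the integral of W
  have hIWtop : (∫⁻ x, HSaux.Wf V x) ≠ ⊤ := by
    have h := (hasFiniteIntegral_iff_norm V).mp hV.hasFiniteIntegral
    have he : (∫⁻ x, HSaux.Wf V x) = ∫⁻ x, ENNReal.ofReal ‖V x‖ :=
      lintegral_congr fun x => by rw [Real.norm_eq_abs]; rfl
    rw [he]; exact h.ne
  -- finiteness of the integral of U
  have hS0top : (∫⁻ x, HSaux.Uf s V x) ≠ ⊤ := by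
    have hLnn : ∀ x : EuclideanSpace ℝ (Fin 2), 0 ≤ HSaux.Lf x ^ s :=
      fun x => Real.rpow_nonneg (HSaux.Lf_nonneg x) s
    have hsplit : (∫⁻ x, HSaux.Uf s V x)
        = (∫⁻ x, HSaux.Wf V x)
          + ∫⁻ x, HSaux.Wf V x * ENNReal.ofReal (HSaux.Lf x ^ s) := by
      rw [← lintegral_add_left' hWae]
      refine lintegral_congr fun x => ?_
      unfold HSaux.Uf HSaux.Wf
      rw [mul_add, mul_one,
        ENNReal.ofReal_add (abs_nonneg _) (mul_nonneg (abs_nonneg _) (hLnn x)),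
        ENNReal.ofReal_mul (abs_nonneg _)]
    rw [hsplit]
    refine ENNReal.add_ne_top.mpr ⟨hIWtop, ?_⟩
    rw [← lintegral_add_compl (fun x => HSaux.Wf V x * ENNReal.ofReal (HSaux.Lf x ^ s))
      (HSaux.norm_gt_measurable 1)]
    refine ENNReal.add_ne_top.mpr ⟨?_, ?_⟩
    · have heq : (∫⁻ x in {x : EuclideanSpace ℝ (Fin 2) | 1 < ‖x‖},
          HSaux.Wf V x * ENNReal.ofReal (HSaux.Lf x ^ s))
          = ∫⁻ x in {x : EuclideanSpace ℝ (Fin 2) | 1 < ‖x‖},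
            ENNReal.ofReal (|Real.log ‖x‖| ^ s * |V x|) := by
        refine setLIntegral_congr_fun (HSaux.norm_gt_measurable 1)
          (fun x hx => ?_)
        have hx1 : (1:ℝ) ≤ ‖x‖ := le_of_lt hx
        have hL : HSaux.Lf x = |Real.log ‖x‖| := by
          unfold HSaux.Lf
          rw [max_eq_right hx1, abs_of_nonneg (Real.log_nonneg hx1)]
        rw [ENNReal.ofReal_mul (Real.rpow_nonneg (abs_nonneg _) s), hL]
        unfold HSaux.Wf
        ring
      rw [heq]; exact hlns.ne
    · refine ne_of_lt (lt_of_le_of_lt ?_ (lt_top_iff_ne_top.mpr hIWtop))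
      calc (∫⁻ x in {x : EuclideanSpace ℝ (Fin 2) | 1 < ‖x‖}ᶜ,
            HSaux.Wf V x * ENNReal.ofReal (HSaux.Lf x ^ s))
          ≤ ∫⁻ x in {x : EuclideanSpace ℝ (Fin 2) | 1 < ‖x‖}ᶜ, HSaux.Wf V x := by
            refine lintegral_mono_ae ?_
            filter_upwards [ae_restrict_mem (HSaux.norm_gt_measurable 1).compl] with x hx
            have hx1 : ‖x‖ ≤ 1 := not_lt.mp hx
            have hL : HSaux.Lf x = 0 := by
              unfold HSaux.Lf; rw [max_eq_left hx1, Real.log_one]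
            rw [hL]
            calc HSaux.Wf V x * ENNReal.ofReal ((0:ℝ) ^ s)
                ≤ HSaux.Wf V x * 1 :=
                  mul_le_mul_right (ENNReal.ofReal_le_one.mpr (Real.zero_rpow_le_one s)) _
            _ = HSaux.Wf V x := mul_one _
      _ ≤ ∫⁻ x, HSaux.Wf V x := setLIntegral_le_lintegral _ _
  -- measurability of the integrand
  have hrm : Measurable (fun p : EuclideanSpace ℝ (Fin 2) × EuclideanSpace ℝ (Fin 2) =>
      ‖p.1 - p.2‖) := (continuous_norm.comp (continuous_fst.sub continuous_snd)).measurable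
  have hfm : ∀ α : ℝ, AEMeasurable
      (fun p : EuclideanSpace ℝ (Fin 2) × EuclideanSpace ℝ (Fin 2) =>
        |V p.1| * |G p.1 p.2 α - g α| ^ 2 * |V p.2|) volume := by
    intro α
    have h1 : AEMeasurable (fun p : EuclideanSpace ℝ (Fin 2) × EuclideanSpace ℝ (Fin 2) =>
        |V p.1|) volume :=
      hVabs.comp_quasiMeasurePreserving Measure.quasiMeasurePreserving_fst
    have h2 : AEMeasurable (fun p : EuclideanSpace ℝ (Fin 2) × EuclideanSpace ℝ (Fin 2) =>
        |V p.2|) volume :=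
      hVabs.comp_quasiMeasurePreserving Measure.quasiMeasurePreserving_snd
    have h3 : Measurable (fun p : EuclideanSpace ℝ (Fin 2) × EuclideanSpace ℝ (Fin 2) =>
        |G p.1 p.2 α - g α| ^ 2) := by
      have hG : Measurable (fun p : EuclideanSpace ℝ (Fin 2) × EuclideanSpace ℝ (Fin 2) =>
          G p.1 p.2 α) := by
        unfold G
        exact measurable_const.mul (HSaux.K0_measurable.comp (measurable_const.mul hrm))
      exact (continuous_abs.measurable.comp (hG.sub measurable_const)).pow_const 2
    exact (h1.mul h3.aemeasurable).mul h2
  have hIeq : ∀ α : ℝ,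
      (∫ p : EuclideanSpace ℝ (Fin 2) × EuclideanSpace ℝ (Fin 2),
        |V p.1| * |G p.1 p.2 α - g α| ^ 2 * |V p.2|)
      = (∫⁻ p : EuclideanSpace ℝ (Fin 2) × EuclideanSpace ℝ (Fin 2),
          ENNReal.ofReal (|V p.1| * |G p.1 p.2 α - g α| ^ 2 * |V p.2|)).toReal :=
    fun α => integral_eq_lintegral_of_nonneg_ae
      (Filter.Eventually.of_forall fun p => by positivity) (hfm α).aestronglyMeasurable
  -- the main littleO statement against |log α| ^ (2-s)
  have hmain : (fun α : ℝ => ∫ p : EuclideanSpace ℝ (Fin 2) × EuclideanSpace ℝ (Fin 2),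
        |V p.1| * |G p.1 p.2 α - g α| ^ 2 * |V p.2|)
      =o[nhdsWithin 0 (Set.Ioi (0 : ℝ))] (fun α : ℝ => |Real.log α| ^ (2 - s)) := by
    rw [Asymptotics.isLittleO_iff]
    intro ε hε
    set S0 := ∫⁻ x, HSaux.Uf s V x with hS0d
    set S0' := S0.toReal with hS0'
    have hS0'0 : 0 ≤ S0' := ENNReal.toReal_nonneg
    have hδpos : (0:ℝ≥0∞) < ENNReal.ofReal (ε / (32 * (S0' + 1))) := by
      rw [ENNReal.ofReal_pos]; positivity
    obtain ⟨ρ, hρe, hρσ⟩ := HSaux.tail_small (lt_top_iff_ne_top.mpr hS0top) hδpos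
    have hexp1 : (1:ℝ) ≤ Real.exp 1 := by
      have := Real.add_one_le_exp 1; linarith
    have hρ0 : 0 < ρ := lt_of_lt_of_le (lt_of_lt_of_le one_pos hexp1) hρe
    set σ := ∫⁻ x in {x : EuclideanSpace ℝ (Fin 2) | ρ < ‖x‖}, HSaux.Uf s V x with hσd
    set IW := ∫⁻ x, HSaux.Wf V x with hIWd
    set Cr := ∫⁻ p : EuclideanSpace ℝ (Fin 2) × EuclideanSpace ℝ (Fin 2) in
        {p : EuclideanSpace ℝ (Fin 2) × EuclideanSpace ℝ (Fin 2) | ‖p.1 - p.2‖ < Real.exp 1},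
      ENNReal.ofReal (|V p.1| * (Real.log ‖p.1 - p.2‖) ^ 2 * |V p.2|) with hCrd
    set C0 := ENNReal.ofReal 8 * (IW * IW) + ENNReal.ofReal 2 * Cr
      + ENNReal.ofReal (2 * (Real.log (2 * ρ)) ^ 2) * (IW * IW) with hC0d
    have hC0top : C0 ≠ ⊤ := by
      rw [hC0d]
      refine ENNReal.add_ne_top.mpr ⟨ENNReal.add_ne_top.mpr ⟨?_, ?_⟩, ?_⟩
      · exact ENNReal.mul_ne_top ENNReal.ofReal_ne_top (ENNReal.mul_ne_top hIWtop hIWtop)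
      · exact ENNReal.mul_ne_top ENNReal.ofReal_ne_top hroll.ne
      · exact ENNReal.mul_ne_top ENNReal.ofReal_ne_top (ENNReal.mul_ne_top hIWtop hIWtop)
    have hσtop : σ ≠ ⊤ := ne_top_of_lt (lt_of_lt_of_le hρσ le_top)
    -- eventual facts
    have hev1 : ∀ᶠ α : ℝ in nhdsWithin 0 (Set.Ioi 0), α ∈ Set.Ioi (0:ℝ) :=
      Filter.eventually_of_mem self_mem_nhdsWithin fun x hx => hx
    have hev2 : ∀ᶠ α : ℝ in nhdsWithin 0 (Set.Ioi 0), α < 1 / (8 * ρ) := by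
      have hpos : (0:ℝ) < 1 / (8 * ρ) := by positivity
      exact Filter.eventually_of_mem
        (mem_nhdsWithin_of_mem_nhds (Iio_mem_nhds hpos)) fun x hx => hx
    have htendsto : Filter.Tendsto (fun α : ℝ => (-Real.log α) ^ (2 - s))
        (nhdsWithin 0 (Set.Ioi 0)) Filter.atTop := by
      have h1 : Filter.Tendsto (fun α : ℝ => -Real.log α)
          (nhdsWithin 0 (Set.Ioi 0)) Filter.atTop :=
        tendsto_neg_atBot_atTop.comp Real.tendsto_log_nhdsGT_zero
      exact (tendsto_rpow_atTop (by linarith)).comp h1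
    have hev3 := htendsto.eventually_ge_atTop (2 * C0.toReal / ε)
    filter_upwards [hev1, hev2, hev3] with α hα0 hαρ hα3
    have hα : 0 < α := hα0
    have hα1 : α < 1 := by
      have h1 : 1 / (8 * ρ) ≤ 1 := by
        rw [div_le_one (by linarith)]; linarith
      linarith
    have hlogα : 0 < -Real.log α := by
      have := Real.log_neg hα hα1; linarith
    have hYnn : 0 ≤ (-Real.log α) ^ (2 - s) := Real.rpow_nonneg hlogα.le _
    have hkey := HSaux.key_estimate s hs0 hs1.le V hWae hUae hα hρe hαρ
    set X := ENNReal.ofReal ((-Real.log α) ^ (2 - s)) with hXd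
    have hTailtop : X * (16 * (σ * S0)) ≠ ⊤ :=
      ENNReal.mul_ne_top ENNReal.ofReal_ne_top
        (ENNReal.mul_ne_top (by norm_num) (ENNReal.mul_ne_top hσtop hS0top))
    have hIle : (∫ p : EuclideanSpace ℝ (Fin 2) × EuclideanSpace ℝ (Fin 2),
          |V p.1| * |G p.1 p.2 α - g α| ^ 2 * |V p.2|)
        ≤ C0.toReal + (-Real.log α) ^ (2 - s) * (16 * (σ.toReal * S0')) := by
      rw [hIeq α]
      refine le_trans
        (ENNReal.toReal_mono (ENNReal.add_ne_top.mpr ⟨hC0top, hTailtop⟩) hkey) ?_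
      rw [ENNReal.toReal_add hC0top hTailtop, ENNReal.toReal_mul, ENNReal.toReal_mul,
        ENNReal.toReal_mul, ENNReal.toReal_ofNat, hXd, ENNReal.toReal_ofReal hYnn]
    have hσ' : σ.toReal ≤ ε / (32 * (S0' + 1)) := by
      have h := ENNReal.toReal_mono ENNReal.ofReal_ne_top hρσ.le
      rwa [ENNReal.toReal_ofReal (by positivity)] at h
    have hA : 16 * (σ.toReal * S0') ≤ ε / 2 := by
      have hσnn : 0 ≤ σ.toReal := ENNReal.toReal_nonneg
      have h1 : σ.toReal * S0' ≤ ε / (32 * (S0' + 1)) * S0' :=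
        mul_le_mul_of_nonneg_right hσ' hS0'0
      have h2 : ε / (32 * (S0' + 1)) * S0' ≤ ε / 32 := by
        rw [div_mul_eq_mul_div, div_le_div_iff₀ (by positivity) (by norm_num)]
        nlinarith
      linarith
    have hB : C0.toReal ≤ ε / 2 * (-Real.log α) ^ (2 - s) := by
      have h := (div_le_iff₀ hε).mp hα3
      nlinarith
    have habs : |Real.log α| = -Real.log α := abs_of_neg (Real.log_neg hα hα1)
    have hfnn : 0 ≤ ∫ p : EuclideanSpace ℝ (Fin 2) × EuclideanSpace ℝ (Fin 2),
        |V p.1| * |G p.1 p.2 α - g α| ^ 2 * |V p.2| :=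
      integral_nonneg fun p => by positivity
    rw [Real.norm_eq_abs, Real.norm_eq_abs, abs_of_nonneg hfnn, habs,
      abs_of_nonneg hYnn]
    have htail : (-Real.log α) ^ (2 - s) * (16 * (σ.toReal * S0'))
        ≤ (-Real.log α) ^ (2 - s) * (ε / 2) :=
      mul_le_mul_of_nonneg_left hA hYnn
    nlinarith [hIle, hB, htail]
  refine ⟨hmain, hmain.trans_isBigO ?_⟩
  refine Asymptotics.IsBigO.of_bound ((2 * Real.pi) ^ (2 - s))
    (Filter.Eventually.of_forall fun α => ?_)
  have h2π : (0:ℝ) < 2 * Real.pi := by positivity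
  have hg : |g α| = |Real.log α| / (2 * Real.pi) := by
    unfold g
    rw [abs_div, abs_of_pos h2π, abs_neg]
  rw [Real.norm_eq_abs, Real.norm_eq_abs,
    abs_of_nonneg (Real.rpow_nonneg (abs_nonneg _) _),
    abs_of_nonneg (Real.rpow_nonneg (abs_nonneg _) _), hg,
    Real.div_rpow (abs_nonneg _) h2π.le]
  rw [mul_div_cancel₀ _ (ne_of_gt (Real.rpow_pos_of_pos h2π _))]
end
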